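/- arXiv:2012.01004 — 5 statements merged into one kernel-verified Lean document; each statement's English description precedes it below -/
import Mathlib

section
/- If the weight profile w is cumulatively ordered, then for every problem (P, q) there exists a w-popular matching. -/
open scoped Classical

section Defs

variable {I O : Type} [Fintype I] [Fintype O]

/-- A mechanism maps each problem (preference profile, capacity profile) to an assignment. -/
abbrev Mechanism (I O : Type) : Type :=
  (I → LinearOrder (Option O)) → (O → ℕ) → I → Option O

/-- `x` is strictly preferred to `y` under the strict preference (linear order) `p`,
where `none` represents being unassigned (∅). -/
def Prefers (p : LinearOrder (Option O)) (x y : Option O) : Prop := p.lt y x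

/-- A matching: each object `a` is assigned to at most `q a` agents. -/
def IsMatching (q : O → ℕ) (μ : I → Option O) : Prop :=
  ∀ a : O, (Finset.univ.filter fun i : I => μ i = some a).card ≤ q a

/-- Every object has capacity at least one. -/
def ValidCaps (q : O → ℕ) : Prop := ∀ a : O, 1 ≤ q a

/-- `μ` is more w-popular than `μ'`. -/
def MoreWPopular (w : I → ℝ) (P : I → LinearOrder (Option O)) (μ μ' : I → Option O) : Prop :=
  (∑ j ∈ Finset.univ.filter fun j : I => Prefers (P j) (μ' j) (μ j), w j)
    < ∑ i ∈ Finset.univ.filter fun i : I => Prefers (P i) (μ i) (μ' i), w i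

/-- `μ` is a w-popular matching for problem `(P, q)`. -/
def WPopular (w : I → ℝ) (P : I → LinearOrder (Option O)) (q : O → ℕ)
    (μ : I → Option O) : Prop :=
  IsMatching q μ ∧ ∀ μ', IsMatching q μ' → ¬ MoreWPopular w P μ' μ

/-- `μ` is more popular than `μ'` (unweighted, counting agents). -/
def MorePopular (P : I → LinearOrder (Option O)) (μ μ' : I → Option O) : Prop :=
  (Finset.univ.filter fun j : I => Prefers (P j) (μ' j) (μ j)).card
    < (Finset.univ.filter fun i : I => Prefers (P i) (μ i) (μ' i)).card

/-- `μ` is a popular matching for problem `(P, q)`. -/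
def Popular (P : I → LinearOrder (Option O)) (q : O → ℕ) (μ : I → Option O) : Prop :=
  IsMatching q μ ∧ ∀ μ', IsMatching q μ' → ¬ MorePopular P μ' μ

/-- `μ'` Pareto improves upon `μ`. -/
def ParetoImproves (P : I → LinearOrder (Option O)) (μ' μ : I → Option O) : Prop :=
  (∀ i : I, (P i).le (μ i) (μ' i)) ∧ ∃ j : I, Prefers (P j) (μ' j) (μ j)

/-- `μ` is non-wasteful: no agent prefers an object with unfilled capacity to her assignment. -/
def NonWasteful (P : I → LinearOrder (Option O)) (q : O → ℕ) (μ : I → Option O) : Prop :=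
  ∀ (i : I) (a : O), (Finset.univ.filter fun j : I => μ j = some a).card < q a →
    ¬ Prefers (P i) (some a) (μ i)

/-- The enumeration `e` lists the agents in weakly decreasing order of weight. -/
def DecreasingEnum (w : I → ℝ) (e : Fin (Fintype.card I) ≃ I) : Prop :=
  ∀ j k : Fin (Fintype.card I), j ≤ k → w (e k) ≤ w (e j)

/-- The weight profile is cumulatively ordered (w.r.t. the decreasing enumeration `e`):
each agent's weight is at least the sum of the weights of all later agents. -/
def CumulativelyOrdered (w : I → ℝ) (e : Fin (Fintype.card I) ≃ I) : Prop :=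
  ∀ j : Fin (Fintype.card I),
    (∑ k ∈ Finset.univ.filter fun k : Fin (Fintype.card I) => j < k, w (e k)) ≤ w (e j)

/-- All weights are pairwise different. -/
def DistinctWeights (w : I → ℝ) : Prop := Function.Injective w

/-- Essentially distinct (w.r.t. the decreasing enumeration `e`): all weights except possibly
the last two are pairwise different, the last two are equal, and the third-from-last weight is
at least the sum of the last two.  (Paper indices `i_1, …, i_n` correspond to `e 0, …, e (n-1)`.) -/
def EssentiallyDistinct (w : I → ℝ) (e : Fin (Fintype.card I) ≃ I) : Prop :=
  (∀ j k : Fin (Fintype.card I), j < k → (k : ℕ) + 2 ≤ Fintype.card I → w (e j) ≠ w (e k)) ∧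
  (∀ j k : Fin (Fintype.card I), (j : ℕ) + 2 = Fintype.card I → (k : ℕ) + 1 = Fintype.card I →
    w (e j) = w (e k)) ∧
  (∀ j k l : Fin (Fintype.card I), (j : ℕ) + 3 = Fintype.card I →
    (k : ℕ) + 2 = Fintype.card I → (l : ℕ) + 1 = Fintype.card I →
    w (e k) + w (e l) ≤ w (e j))

/-- The most preferred element (under `p`) of `{∅} ∪ {objects with remaining capacity}`. -/
noncomputable def sdChoice (p : LinearOrder (Option O)) (rem : O → ℕ) : Option O :=
  @Finset.max' (Option O) p
    (insert none ((Finset.univ.filter fun a : O => 0 < rem a).image some))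
    ⟨none, Finset.mem_insert_self _ _⟩

/-- State of the serial dictatorship after the first `k` agents (in the order `e`) have picked:
the partial assignment and the remaining capacities. -/
noncomputable def sdState (e : Fin (Fintype.card I) ≃ I)
    (P : I → LinearOrder (Option O)) (q : O → ℕ) : ℕ → (I → Option O) × (O → ℕ)
  | 0 => (fun _ => none, q)
  | k + 1 =>
    let prev := sdState e P q k
    if h : k < Fintype.card I then
      let i := e ⟨k, h⟩
      let c := sdChoice (P i) prev.2
      (Function.update prev.1 i c, fun a => if c = some a then prev.2 a - 1 else prev.2 a)
    else prev

/-- The outcome of the serial dictatorship with agent ordering `e` at problem `(P, q)`: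
agents pick, one by one in the order `e`, their most preferred acceptable object with
remaining capacity (and get ∅ if none remains). -/
noncomputable def SD (e : Fin (Fintype.card I) ≃ I)
    (P : I → LinearOrder (Option O)) (q : O → ℕ) : I → Option O :=
  (sdState e P q (Fintype.card I)).1

/-- An agent ordering is consistent with the weight profile `w` if agents with strictly larger
weight come strictly earlier. -/
def ConsistentOrder (w : I → ℝ) (e : Fin (Fintype.card I) ≃ I) : Prop :=
  ∀ i j : I, w j < w i → e.symm i < e.symm j

/-- A mechanism always produces a matching. -/
def IsMechanism (ψ : Mechanism I O) : Prop :=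
  ∀ P q, ValidCaps q → IsMatching q (ψ P q)

/-- Strategy-proofness: no agent can ever obtain a strictly preferred assignment
by misreporting. -/
def StrategyProof (ψ : Mechanism I O) : Prop :=
  ∀ P q, ValidCaps q → ∀ (i : I) (P'i : LinearOrder (Option O)),
    ¬ Prefers (P i) (ψ (Function.update P i P'i) q i) (ψ P q i)

/-- A mechanism is w-popular if its outcome is w-popular whenever a w-popular matching exists. -/
def WPopularMech (w : I → ℝ) (ψ : Mechanism I O) : Prop :=
  ∀ P q, ValidCaps q → (∃ μ, WPopular w P q μ) → WPopular w P q (ψ P q)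

/-- A mechanism is popular if its outcome is popular whenever a popular matching exists. -/
def PopularMech (ψ : Mechanism I O) : Prop :=
  ∀ P q, ValidCaps q → (∃ μ, Popular P q μ) → Popular P q (ψ P q)

/-- A mechanism is non-wasteful if its outcome is always non-wasteful. -/
def NonWastefulMech (ψ : Mechanism I O) : Prop :=
  ∀ P q, ValidCaps q → NonWasteful P q (ψ P q)

/-- `p` declares `a` as its only acceptable object (the class 𝒫ₐ). -/
def OnlyAcceptable (p : LinearOrder (Option O)) (a : O) : Prop :=
  p.lt none (some a) ∧ ∀ b : O, b ≠ a → p.lt (some b) none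

/-- `p` declares no object acceptable (the class 𝒫_∅). -/
def NothingAcceptable (p : LinearOrder (Option O)) : Prop :=
  ∀ b : O, p.lt (some b) none

/-- Preserving dispute resolutions. -/
def PreservesDisputeResolutions (ψ : Mechanism I O) : Prop :=
  ∀ P q, ValidCaps q → ∀ (i j : I) (a : O) (P'i : LinearOrder (Option O)),
    ψ P q j = some a → Prefers (P i) (some a) (ψ P q i) →
    OnlyAcceptable P'i a → ψ (Function.update P i P'i) q i = none →
    ∀ (P'' : I → LinearOrder (Option O)) (q' : O → ℕ), ValidCaps q' → q' a = 1 →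
      OnlyAcceptable (P'' i) a → OnlyAcceptable (P'' j) a →
      (∀ k : I, k ≠ i → k ≠ j → NothingAcceptable (P'' k)) →
      ψ P'' q' i = none ∧ ψ P'' q' j = some a

/-- `P'` is a (pure) Nash equilibrium of the preference-reporting game induced by `ψ`
at the problem `(P, q)` (true preferences `P`). -/
def NashEq (ψ : Mechanism I O) (P : I → LinearOrder (Option O)) (q : O → ℕ)
    (P' : I → LinearOrder (Option O)) : Prop :=
  ∀ (i : I) (P''i : LinearOrder (Option O)),
    ¬ Prefers (P i) (ψ (Function.update P' i P''i) q i) (ψ P' q i)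

/-- The mechanism admits a Nash equilibrium at every problem. -/
def AdmitsNash (ψ : Mechanism I O) : Prop :=
  ∀ P q, ValidCaps q → ∃ P', NashEq ψ P q P'

/-- w-popularity in equilibrium: every Nash-equilibrium outcome is w-popular
whenever a w-popular matching exists. -/
def WPopularInEquilibrium (w : I → ℝ) (ψ : Mechanism I O) : Prop :=
  ∀ P q, ValidCaps q → ∀ P', NashEq ψ P q P' →
    (∃ μ, WPopular w P q μ) → WPopular w P q (ψ P' q)

end Defs

/-!
Take a matching `μ` that is lexicographically maximal among all matchings, comparing agents in
the order `e` by their own preferences (this is the serial dictatorship outcome). Against any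
other matching `ν`, the first agent at which the two differ strictly prefers `μ`, and every agent
who prefers `ν` comes later; by cumulative ordering the weight of that first agent alone is at
least the total weight of all later agents.
-/

open Finset

theorem exists_lex_max {ι α : Type*} [LinearOrder ι] [Fintype ι]
    (r : ι → LinearOrder α) (S : Finset (ι → α)) (hS : S.Nonempty) :
    ∃ μ ∈ S, ∀ ν ∈ S, ∀ j, (∀ k < j, ν k = μ k) → (r j).le (ν j) (μ j) := by
  suffices h : ∀ s : Finset ι,
      ∃ μ ∈ S, ∀ ν ∈ S, ∀ j ∈ s, (∀ k < j, ν k = μ k) → (r j).le (ν j) (μ j) by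
    obtain ⟨μ, hμS, hμ⟩ := h univ
    exact ⟨μ, hμS, fun ν hν j => hμ ν hν j (mem_univ j)⟩
  intro s
  induction s using Finset.induction_on_max with
  | empty =>
    obtain ⟨μ, hμS⟩ := hS
    exact ⟨μ, hμS, by simp⟩
  | insert a s hsa ih =>
    obtain ⟨μ, hμS, hμ⟩ := ih
    let := r a
    obtain ⟨μ', hμ'T, hμ'⟩ := exists_max_image (S.filter fun ν => ∀ k < a, ν k = μ k)
      (fun ν => ν a) ⟨μ, mem_filter.2 ⟨hμS, fun _ _ => rfl⟩⟩
    obtain ⟨hμ'S, hμ'μ⟩ := mem_filter.1 hμ'T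
    refine ⟨μ', hμ'S, fun ν hν j hj hνμ' => ?_⟩
    rcases mem_insert.1 hj with rfl | hjs
    · exact hμ' ν (mem_filter.2 ⟨hν, fun k hk => (hνμ' k hk).trans (hμ'μ k hk)⟩)
    · have hja := hsa j hjs
      rw [hμ'μ j hja]
      exact hμ ν hν j hjs fun k hk => (hνμ' k hk).trans (hμ'μ k (hk.trans hja))

section Popularity

variable {I O : Type} [Fintype I] {w : I → ℝ} {e : Fin (Fintype.card I) ≃ I}
  {P : I → LinearOrder (Option O)} {μ ν : I → Option O}

theorem not_moreWPopular_of_lex_le (hw : ∀ i, 0 ≤ w i) (hco : CumulativelyOrdered w e)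
    (hlex : ∀ j, (∀ k < j, ν (e k) = μ (e k)) → (P (e j)).le (ν (e j)) (μ (e j))) :
    ¬ MoreWPopular w P ν μ := by
  by_cases hνμ : ∀ j, ν (e j) = μ (e j)
  · obtain rfl : ν = μ := funext fun i => by simpa using hνμ (e.symm i)
    exact lt_irrefl _
  push Not at hνμ
  obtain ⟨j₀, hj₀⟩ := exists_minimal_of_wellFoundedLT _ hνμ
  have hagree : ∀ k < j₀, ν (e k) = μ (e k) := fun k hk => not_not.1 (hj₀.not_prop_of_lt hk)
  have hwin : Prefers (P (e j₀)) (μ (e j₀)) (ν (e j₀)) :=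
    @lt_of_le_of_ne _ (P (e j₀)).toPartialOrder _ _ (hlex j₀ hagree) hj₀.prop
  have hlosers : (univ.filter fun i => Prefers (P i) (ν i) (μ i)) ⊆
      (univ.filter fun k => j₀ < k).map e.toEmbedding := by
    intro i hi
    have hi := (mem_filter.1 hi).2
    refine mem_map.2 ⟨e.symm i, mem_filter.2 ⟨mem_univ _, ?_⟩, e.apply_symm_apply i⟩
    rcases lt_trichotomy j₀ (e.symm i) with h | h | h
    · exact h
    · rw [h, e.apply_symm_apply] at hwin
      exact absurd hi (@lt_asymm _ (P i).toPreorder _ _ hwin)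
    · have := hagree _ h
      rw [e.apply_symm_apply] at this
      rw [this] at hi
      exact absurd hi (@lt_irrefl _ (P i).toPreorder _)
  unfold MoreWPopular
  push Not
  calc ∑ i ∈ univ.filter fun i => Prefers (P i) (ν i) (μ i), w i
      ≤ ∑ i ∈ (univ.filter fun k => j₀ < k).map e.toEmbedding, w i :=
        sum_le_sum_of_subset_of_nonneg hlosers fun i _ _ => hw i
    _ = ∑ k ∈ univ.filter fun k => j₀ < k, w (e k) := sum_map _ _ _
    _ ≤ w (e j₀) := hco j₀
    _ ≤ ∑ i ∈ univ.filter fun i => Prefers (P i) (μ i) (ν i), w i :=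
        single_le_sum (fun i _ => hw i) (mem_filter.2 ⟨mem_univ _, hwin⟩)

end Popularity

theorem stmt2_general {I O : Type} [Fintype I] [Fintype O]
    (w : I → ℝ) (hw : ∀ i, 0 < w i)
    (e : Fin (Fintype.card I) ≃ I)
    (hco : CumulativelyOrdered w e)
    (P : I → LinearOrder (Option O)) (q : O → ℕ) :
    ∃ μ : I → Option O, WPopular w P q μ := by
  have hempty : IsMatching q (fun _ : I => (none : Option O)) := fun a => by simp
  obtain ⟨κ, hκ, hlex⟩ := exists_lex_max (fun j => P (e j))
    ((univ.filter (IsMatching q)).image (· ∘ e))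
    ⟨_, mem_image_of_mem _ (mem_filter.2 ⟨mem_univ _, hempty⟩)⟩
  obtain ⟨μ, hμ, rfl⟩ := mem_image.1 hκ
  refine ⟨μ, (mem_filter.1 hμ).2, fun ν hν => ?_⟩
  apply not_moreWPopular_of_lex_le (fun i => (hw i).le) hco
  exact hlex _ (mem_image_of_mem _ (mem_filter.2 ⟨mem_univ _, hν⟩))

/-- Cumulatively ordered weights guarantee existence of a w-popular matching. -/
theorem stmt2 {I O : Type} [Fintype I] [Fintype O]
    (hI : 3 ≤ Fintype.card I) (hIO : Fintype.card I ≤ Fintype.card O)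
    (w : I → ℝ) (hw : ∀ i, 0 < w i)
    (e : Fin (Fintype.card I) ≃ I) (he : DecreasingEnum w e)
    (hco : CumulativelyOrdered w e)
    (P : I → LinearOrder (Option O)) (q : O → ℕ) (hq : ValidCaps q) :
    ∃ μ : I → Option O, WPopular w P q μ :=
  stmt2_general w hw e hco P q
end

section
/- If the weight profile w is cumulatively ordered, then for every problem (P, q) the outcome of the serial dictatorship that processes the agents in weakly decreasing order of their weights is a w-popular matching. -/
open scoped Classical

/-!
The weight of any agent is at least the total weight of all agents after her, so a comparison
between two matchings is decided by the first agent (in the order `e`) who is assigned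
differently. Serial dictatorship is lexicographically optimal along `e`: if another matching agrees
with it on the first agents, the next agent could have picked her object in the other matching
herself, so she weakly prefers what she got. Hence every matching is weakly less w-popular than
the serial dictatorship outcome.
-/

lemma card_filter_update_eq_some {I O : Type} [Fintype I] (μ : I → Option O) {i : I}
    (hi : μ i = none) (c : Option O) (a : O) :
    (Finset.univ.filter fun j => Function.update μ i c j = some a).card =
      (Finset.univ.filter fun j => μ j = some a).card + if c = some a then 1 else 0 := by
  split_ifs with hc
  · rw [← Finset.card_insert_of_notMem (a := i) (s := Finset.univ.filter fun j => μ j = some a)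
      (by simp [hi])]
    congr 1
    ext j
    by_cases hj : j = i <;> simp [hj, hc]
  · congr 1
    ext j
    by_cases hj : j = i <;> simp [hj, hc, hi]

section SerialDictatorship

variable {I O : Type} [Fintype I] [Fintype O]
  (e : Fin (Fintype.card I) ≃ I) (P : I → LinearOrder (Option O)) (q : O → ℕ)

lemma pos_of_sdChoice_eq_some {p : LinearOrder (Option O)} {rem : O → ℕ} {a : O}
    (h : sdChoice p rem = some a) : 0 < rem a := by
  have hmem := @Finset.max'_mem (Option O) p
    (insert none ((Finset.univ.filter fun a : O => 0 < rem a).image some))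
    ⟨none, Finset.mem_insert_self _ _⟩
  rw [← sdChoice, h] at hmem
  simpa using hmem

lemma le_sdChoice_of_mem (p : LinearOrder (Option O)) (rem : O → ℕ) {x : Option O}
    (hx : x = none ∨ ∃ a, x = some a ∧ 0 < rem a) : p.le x (sdChoice p rem) := by
  apply Finset.le_max'
  rcases hx with rfl | ⟨a, rfl, ha⟩ <;> simp_all

lemma sdState_succ (k : ℕ) (hk : k < Fintype.card I) :
    sdState e P q (k + 1) =
      (Function.update (sdState e P q k).1 (e ⟨k, hk⟩)
         (sdChoice (P (e ⟨k, hk⟩)) (sdState e P q k).2),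
       fun a => if sdChoice (P (e ⟨k, hk⟩)) (sdState e P q k).2 = some a
                then (sdState e P q k).2 a - 1 else (sdState e P q k).2 a) := by
  simp only [sdState, dif_pos hk]

lemma sdState_succ_of_le (k : ℕ) (hk : Fintype.card I ≤ k) :
    sdState e P q (k + 1) = sdState e P q k := by
  simp only [sdState, dif_neg (not_lt.2 hk)]

lemma sdState_fst_apply_eq_sdChoice (k : ℕ) (j : Fin (Fintype.card I)) :
    (sdState e P q k).1 (e j) =
      if (j : ℕ) < k then sdChoice (P (e j)) (sdState e P q j).2 else none := by
  induction k with
  | zero => rfl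
  | succ k ih =>
    rcases lt_or_ge k (Fintype.card I) with hk | hk
    · rw [sdState_succ e P q k hk]
      by_cases hjk : (j : ℕ) = k
      · obtain rfl : j = ⟨k, hk⟩ := Fin.ext hjk
        simp
      · have hne : e j ≠ e ⟨k, hk⟩ := fun h => hjk (congrArg Fin.val (e.injective h))
        dsimp only
        rw [Function.update_of_ne hne, ih]
        simp only [show (j : ℕ) < k + 1 ↔ (j : ℕ) < k by omega]
    · have := j.isLt
      rw [sdState_succ_of_le e P q k hk, ih, if_pos (by omega), if_pos (by omega)]

lemma SD_apply (j : Fin (Fintype.card I)) :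
    SD e P q (e j) = sdChoice (P (e j)) (sdState e P q j).2 := by
  rw [SD, sdState_fst_apply_eq_sdChoice, if_pos j.isLt]

lemma sdState_fst_apply (k : ℕ) (j : Fin (Fintype.card I)) :
    (sdState e P q k).1 (e j) = if (j : ℕ) < k then SD e P q (e j) else none := by
  rw [sdState_fst_apply_eq_sdChoice, SD_apply]

lemma card_filter_sdState_add_snd (k : ℕ) (a : O) :
    (Finset.univ.filter fun i => (sdState e P q k).1 i = some a).card
      + (sdState e P q k).2 a = q a := by
  induction k with
  | zero => simp [sdState]
  | succ k ih =>
    rcases lt_or_ge k (Fintype.card I) with hk | hk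
    · have hfree : (sdState e P q k).1 (e ⟨k, hk⟩) = none := by
        simp [sdState_fst_apply]
      rw [sdState_succ e P q k hk]
      dsimp only
      rw [card_filter_update_eq_some _ hfree]
      split_ifs with hc
      · have := pos_of_sdChoice_eq_some hc
        omega
      · omega
    · rwa [sdState_succ_of_le e P q k hk]

theorem SD_isMatching : IsMatching q (SD e P q) := fun a =>
  (card_filter_sdState_add_snd e P q _ a).symm ▸ Nat.le_add_right _ _

theorem SD_le_of_eqOn_lt {μ : I → Option O} (hμ : IsMatching q μ) (j : Fin (Fintype.card I))
    (hagree : ∀ k < j, μ (e k) = SD e P q (e k)) :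
    (P (e j)).le (μ (e j)) (SD e P q (e j)) := by
  rw [SD_apply]
  apply le_sdChoice_of_mem
  rcases hμj : μ (e j) with _ | a
  · exact .inl rfl
  refine .inr ⟨a, rfl, ?_⟩
  have htaken : insert (e j) (Finset.univ.filter fun i => (sdState e P q j).1 i = some a)
      ⊆ Finset.univ.filter fun i => μ i = some a := by
    intro i hi
    obtain ⟨k, rfl⟩ := e.surjective i
    simp only [Finset.mem_insert, Finset.mem_filter, Finset.mem_univ, true_and,
      sdState_fst_apply] at hi ⊢
    rcases hi with hk | hk
    · rw [hk, hμj]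
    · split_ifs at hk with hkj
      · rwa [hagree k hkj]
  have hcard := Finset.card_le_card htaken
  rw [Finset.card_insert_of_notMem (by simp [sdState_fst_apply])] at hcard
  have := card_filter_sdState_add_snd e P q j a
  have := hμ a
  omega

end SerialDictatorship

section CumulativeWeights

variable {I O : Type} [Fintype I] {w : I → ℝ} {e : Fin (Fintype.card I) ≃ I}

lemma sum_le_of_cumulativelyOrdered (hw : ∀ i, 0 ≤ w i) (hco : CumulativelyOrdered w e)
    {B : Finset I} {j : Fin (Fintype.card I)} (hB : ∀ i ∈ B, j < e.symm i) :
    ∑ i ∈ B, w i ≤ w (e j) := calc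
  ∑ i ∈ B, w i = ∑ k ∈ B.map e.symm.toEmbedding, w (e k) := by simp
  _ ≤ ∑ k ∈ Finset.univ.filter (j < ·), w (e k) := by
    refine Finset.sum_le_sum_of_subset_of_nonneg ?_ fun k _ _ => hw (e k)
    intro k hk
    obtain ⟨i, hi, rfl⟩ := Finset.mem_map.1 hk
    simpa using hB i hi
  _ ≤ w (e j) := hco j

lemma not_moreWPopular_self (P : I → LinearOrder (Option O)) (μ : I → Option O) :
    ¬ MoreWPopular w P μ μ := by
  simp [MoreWPopular]

theorem not_moreWPopular_of_lexLE (hw : ∀ i, 0 ≤ w i) (hco : CumulativelyOrdered w e)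
    (P : I → LinearOrder (Option O)) {μ μ' : I → Option O}
    (hlex : ∀ j, (∀ k < j, μ' (e k) = μ (e k)) → (P (e j)).le (μ' (e j)) (μ (e j))) :
    ¬ MoreWPopular w P μ' μ := by
  by_cases hdiff : ∃ j, μ' (e j) ≠ μ (e j)
  swap
  · push Not at hdiff
    obtain rfl : μ' = μ := funext fun i => by simpa using hdiff (e.symm i)
    exact not_moreWPopular_self P μ'
  obtain ⟨j, hj, hmin⟩ := wellFounded_lt.has_min {j | μ' (e j) ≠ μ (e j)} hdiff
  have hagree : ∀ k < j, μ' (e k) = μ (e k) := fun k hk => not_not.1 fun h => hmin k h hk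
  have hwins : Prefers (P (e j)) (μ (e j)) (μ' (e j)) :=
    @lt_of_le_of_ne _ (P (e j)).toPartialOrder _ _ (hlex j hagree) hj
  have hlater :
      ∀ i ∈ Finset.univ.filter fun i => Prefers (P i) (μ' i) (μ i), j < e.symm i := by
    intro i hi
    obtain ⟨k, rfl⟩ := e.surjective i
    have hk : Prefers (P (e k)) (μ' (e k)) (μ (e k)) := (Finset.mem_filter.1 hi).2
    rw [Equiv.symm_apply_apply]
    rcases lt_trichotomy j k with hjk | rfl | hkj
    · exact hjk
    · exact absurd hk (@lt_asymm _ (P (e j)).toPreorder _ _ hwins)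
    · exact absurd (hagree k hkj) fun h => @lt_irrefl _ (P (e k)).toPreorder _ (h ▸ hk)
  rw [MoreWPopular, not_lt]
  calc ∑ i ∈ Finset.univ.filter (fun i => Prefers (P i) (μ' i) (μ i)), w i
      ≤ w (e j) := sum_le_of_cumulativelyOrdered hw hco hlater
    _ ≤ ∑ i ∈ Finset.univ.filter (fun i => Prefers (P i) (μ i) (μ' i)), w i :=
      Finset.single_le_sum (fun i _ => hw i) (Finset.mem_filter.2 ⟨Finset.mem_univ _, hwins⟩)

end CumulativeWeights

theorem stmt3_general {I O : Type} [Fintype I] [Fintype O]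
    (w : I → ℝ) (hw : ∀ i, 0 < w i)
    (e : Fin (Fintype.card I) ≃ I)
    (hco : CumulativelyOrdered w e)
    (P : I → LinearOrder (Option O)) (q : O → ℕ) :
    WPopular w P q (SD e P q) :=
  ⟨SD_isMatching e P q, fun _ hμ' =>
    not_moreWPopular_of_lexLE (fun i => (hw i).le) hco P (SD_le_of_eqOn_lt e P q hμ')⟩

/-- Under cumulatively ordered weights, the serial dictatorship following the
weakly decreasing weight order produces a w-popular matching at every problem. -/
theorem stmt3 {I O : Type} [Fintype I] [Fintype O]
    (hI : 3 ≤ Fintype.card I) (hIO : Fintype.card I ≤ Fintype.card O)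
    (w : I → ℝ) (hw : ∀ i, 0 < w i)
    (e : Fin (Fintype.card I) ≃ I) (he : DecreasingEnum w e)
    (hco : CumulativelyOrdered w e)
    (P : I → LinearOrder (Option O)) (q : O → ℕ) (hq : ValidCaps q) :
    WPopular w P q (SD e P q) :=
  stmt3_general w hw e hco P q
end

section
/- If the weight profile w is not cumulatively ordered, then there exists a problem (P, q) in which no w-popular matching exists. -/
open scoped Classical

/-!
Pick `j` with `w (e j) < ∑ l > j, w (e l)` and let `T` be the `k + 1` agents `e j, e (j + 1), …`;
then no agent of `T` outweighs the rest of `T`. Let all agents of `T` rank `k` unit-capacity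
objects as `c₀ ≻ c₁ ≻ ⋯ ≻ c_{k-1} ≻ ∅` while everybody else accepts nothing. A w-popular matching
is individually rational and non-wasteful, so it hands the `k` objects to all agents of `T` but
one, `z`. Letting `z` take `c_{k-1}` and moving everybody else one place up, the holder of `c₀`
dropping out, makes all of `T` but one agent better off: a more w-popular matching.
-/

open Finset Function

section Popularity

variable {I O : Type} [Fintype I]

theorem Prefers.asymm {p : LinearOrder (Option O)} {x y : Option O} (h : Prefers p x y) :
    ¬ Prefers p y x := by
  let := p
  exact lt_asymm h

theorem Prefers.irrefl (p : LinearOrder (Option O)) (x : Option O) : ¬ Prefers p x x := by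
  let := p
  exact lt_irrefl x

theorem isMatching_one_iff {μ : I → Option O} :
    IsMatching (fun _ => 1) μ ↔ ∀ i j a, μ i = some a → μ j = some a → i = j := by
  simp only [IsMatching, card_le_one, mem_filter, mem_univ, true_and]
  exact ⟨fun h i j a hi hj => h a i hi j hj, fun h a i hi j hj => h i j a hi hj⟩

variable {q : O → ℕ} {μ : I → Option O}

theorem IsMatching.update_none (hμ : IsMatching q μ) (i : I) :
    IsMatching q (update μ i none) := fun a =>
  (card_le_card fun j => by by_cases j = i <;> simp_all).trans (hμ a)

theorem IsMatching.update_some (hμ : IsMatching q μ) (i : I) {a : O}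
    (ha : #{j | μ j = some a} < q a) : IsMatching q (update μ i (some a)) := by
  intro b
  by_cases hb : b = a
  · subst hb
    calc #{j | update μ i (some b) j = some b} ≤ #(insert i ({j | μ j = some b} : Finset I)) :=
          card_le_card fun j => by by_cases j = i <;> simp_all
      _ ≤ q b := (card_insert_le _ _).trans ha
  · exact (card_le_card fun j => by by_cases j = i <;> simp_all [Ne.symm hb]).trans (hμ b)

variable {w : I → ℝ} {P : I → LinearOrder (Option O)}

theorem moreWPopular_of_sum_lt (hw : ∀ i, 0 ≤ w i) {ν : I → Option O} {W L : Finset I}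
    (hW : ∀ i ∈ W, Prefers (P i) (ν i) (μ i)) (hL : ∀ i ∉ L, ¬ Prefers (P i) (μ i) (ν i))
    (h : ∑ i ∈ L, w i < ∑ i ∈ W, w i) : MoreWPopular w P ν μ :=
  calc _ ≤ ∑ i ∈ L, w i :=
        sum_le_sum_of_subset_of_nonneg
          (fun i hi => by_contra fun hiL => hL i hiL (mem_filter.1 hi).2) fun i _ _ => hw i
    _ < ∑ i ∈ W, w i := h
    _ ≤ _ := sum_le_sum_of_subset_of_nonneg
          (fun i hi => mem_filter.2 ⟨mem_univ i, hW i hi⟩) fun i _ _ => hw i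

theorem moreWPopular_update (hw : ∀ i, 0 < w i) {i : I} {x : Option O}
    (h : Prefers (P i) x (μ i)) : MoreWPopular w P (update μ i x) μ := by
  refine moreWPopular_of_sum_lt (fun j => (hw j).le) (W := {i}) (L := ∅) (by simpa) ?_
    (by simpa using hw i)
  intro j _
  by_cases hj : j = i
  · subst hj
    simpa using h.asymm
  · simpa [hj] using Prefers.irrefl _ _

theorem WPopular.not_prefers_none (hw : ∀ i, 0 < w i) (hμ : WPopular w P q μ) (i : I) :
    ¬ Prefers (P i) none (μ i) := fun h =>
  hμ.2 _ (hμ.1.update_none i) (moreWPopular_update hw h)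

theorem WPopular.nonWasteful (hw : ∀ i, 0 < w i) (hμ : WPopular w P q μ) :
    NonWasteful P q μ := fun i _ ha h =>
  hμ.2 _ (hμ.1.update_some i ha) (moreWPopular_update hw h)

theorem exists_unique_unassigned (hμ : IsMatching (fun _ => 1) μ) {T : Finset I} {S : Finset O}
    (hTS : #T = #S + 1) (hmaps : ∀ i a, μ i = some a → i ∈ T ∧ a ∈ S)
    (hfull : ∀ z ∈ T, μ z = none → ∀ a ∈ S, ∃ i, μ i = some a) :
    ∃ z ∈ T, μ z = none ∧ ∀ i ∈ T, i ≠ z → μ i ≠ none := by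
  set H := T.filter fun i => μ i ≠ none
  have hinj : Set.InjOn μ H := by
    intro i hi j _ hij
    obtain ⟨a, ha⟩ := Option.ne_none_iff_exists'.1 (mem_filter.1 hi).2
    exact isMatching_one_iff.1 hμ i j a ha (hij ▸ ha)
  have hHS : #H ≤ #S := by
    rw [← card_image_of_injOn hinj, ← card_map (s := S) Embedding.some]
    refine card_le_card fun x hx => ?_
    obtain ⟨i, hi, rfl⟩ := mem_image.1 hx
    obtain ⟨a, ha⟩ := Option.ne_none_iff_exists'.1 (mem_filter.1 hi).2
    simpa [ha] using (hmaps i a ha).2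
  obtain ⟨z, hzT, hzH⟩ := exists_mem_notMem_of_card_lt_card (s := H) (t := T) (by omega)
  have hz : μ z = none := by simpa [H, hzT] using hzH
  have hSH : #S ≤ #H := by
    rw [← card_map (s := S) Embedding.some]
    refine (card_le_card fun x hx => ?_).trans (card_image_le (s := H) (f := μ))
    obtain ⟨a, ha, rfl⟩ := mem_map.1 hx
    obtain ⟨i, hi⟩ := hfull z hzT hz a ha
    exact mem_image.2 ⟨i, mem_filter.2 ⟨(hmaps i a hi).1, by simp [hi]⟩, hi⟩
  have hH : H = T.erase z := eq_of_subset_of_card_le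
    (fun i hi => mem_erase.2 ⟨fun h => (mem_filter.1 hi).2 (h ▸ hz), (mem_filter.1 hi).1⟩)
    (by rw [card_erase_of_mem hzT]; omega)
  refine ⟨z, hzT, hz, fun i hi hiz => ?_⟩
  have : i ∈ H := hH ▸ mem_erase.2 ⟨hiz, hi⟩
  exact (mem_filter.1 this).2

end Popularity

section CutoffPreference

variable {O : Type} [Fintype O]

noncomputable def objIdx (a : O) : ℕ := Fintype.equivFin O a

theorem objIdx_injective : Injective (objIdx (O := O)) :=
  fun _ _ h => (Fintype.equivFin O).injective (Fin.ext h)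

theorem objIdx_lt_card (a : O) : objIdx a < Fintype.card O := (Fintype.equivFin O a).isLt

noncomputable def objOfIdx (j : ℕ) (hj : j < Fintype.card O) : O :=
  (Fintype.equivFin O).symm ⟨j, hj⟩

@[simp]
theorem objIdx_objOfIdx (j : ℕ) (hj : j < Fintype.card O) : objIdx (objOfIdx j hj) = j := by
  simp [objIdx, objOfIdx]

theorem card_objIdx_lt {k : ℕ} (hk : k ≤ Fintype.card O) : #{a : O | objIdx a < k} = k := by
  calc #{a : O | objIdx a < k} = #{j : Fin (Fintype.card O) | (j : ℕ) < k} := by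
        rw [← card_map (Fintype.equivFin O).toEmbedding]
        congr 1
        ext j
        rw [mem_map_equiv, mem_filter, mem_filter]
        simp [objIdx]
    _ = k := by rw [Fin.card_filter_val_lt, min_eq_right hk]

noncomputable def objPred (a : O) : Option O :=
  if h : objIdx a = 0 then none
  else some (objOfIdx (objIdx a - 1) (by have := objIdx_lt_card a; omega))

theorem objPred_eq_none_iff {a : O} : objPred a = none ↔ objIdx a = 0 := by
  unfold objPred; split_ifs <;> simp_all

theorem objIdx_add_one_of_objPred {a b : O} (h : objPred a = some b) : objIdx b + 1 = objIdx a := by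
  unfold objPred at h
  split_ifs at h with h0
  cases h
  simp only [objIdx_objOfIdx]
  omega

/-- Rank, lower being better, in the order `0, 1, …, k - 1, ∅, k, k + 1, …` of object indices. -/
noncomputable def cutoffRank (k : ℕ) : Option O → ℕ
  | none => k
  | some a => if objIdx a < k then objIdx a else objIdx a + 1

theorem cutoffRank_injective (k : ℕ) : Injective (cutoffRank (O := O) k) := by
  rintro (_ | a) (_ | b) h <;> simp only [cutoffRank] at h
  · rfl
  · split_ifs at h <;> omega
  · split_ifs at h <;> omega
  · exact congrArg some (objIdx_injective (by split_ifs at h <;> omega))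

@[reducible]
noncomputable def cutoffPref (k : ℕ) : LinearOrder (Option O) :=
  LinearOrder.lift' (OrderDual.toDual ∘ cutoffRank k)
    (OrderDual.toDual.injective.comp (cutoffRank_injective k))

theorem prefers_cutoffPref {k : ℕ} {x y : Option O} :
    Prefers (cutoffPref k) x y ↔ cutoffRank k x < cutoffRank k y := Iff.rfl

theorem prefers_cutoffPref_some_none {k : ℕ} {a : O} :
    Prefers (cutoffPref k) (some a) none ↔ objIdx a < k := by
  simp only [prefers_cutoffPref, cutoffRank]
  split_ifs <;> omega

theorem prefers_cutoffPref_none_some {k : ℕ} {a : O} :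
    Prefers (cutoffPref k) none (some a) ↔ k ≤ objIdx a := by
  simp only [prefers_cutoffPref, cutoffRank]
  split_ifs <;> omega

theorem prefers_cutoffPref_some_some {k : ℕ} {a b : O} :
    Prefers (cutoffPref k) (some a) (some b) ↔ objIdx a < objIdx b := by
  simp only [prefers_cutoffPref, cutoffRank]
  split_ifs <;> omega

end CutoffPreference

section Gadget

variable {I O : Type} [Fintype I] [Fintype O]

noncomputable def promote (μ : I → Option O) (z : I) (b : O) : I → Option O :=
  fun i => if i = z then some b else (μ i).bind objPred

theorem isMatching_promote {μ : I → Option O} (hμ : IsMatching (fun _ => 1) μ) (z : I) {b : O}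
    (hb : ∀ i a, μ i = some a → objIdx a ≤ objIdx b) :
    IsMatching (fun _ => 1) (promote μ z b) := by
  have hpred : ∀ i c, i ≠ z → promote μ z b i = some c →
      ∃ a, μ i = some a ∧ objIdx c + 1 = objIdx a := by
    intro i c hiz hi
    simp only [promote, if_neg hiz, Option.bind_eq_some_iff] at hi
    obtain ⟨a, ha, hac⟩ := hi
    exact ⟨a, ha, objIdx_add_one_of_objPred hac⟩
  rw [isMatching_one_iff] at hμ ⊢
  intro i j c hi hj
  by_cases hiz : i = z <;> by_cases hjz : j = z
  · rw [hiz, hjz]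
  · obtain ⟨a, ha, hac⟩ := hpred j c hjz hj
    simp only [promote, if_pos hiz] at hi
    cases hi
    have := hb j a ha
    omega
  · obtain ⟨a, ha, hac⟩ := hpred i c hiz hi
    simp only [promote, if_pos hjz] at hj
    cases hj
    have := hb i a ha
    omega
  · obtain ⟨a, ha, hac⟩ := hpred i c hiz hi
    obtain ⟨a', ha', hac'⟩ := hpred j c hjz hj
    exact hμ i j a ha (objIdx_injective (by omega : objIdx a' = objIdx a) ▸ ha')

theorem prefers_cutoffPref_promote {k : ℕ} {μ : I → Option O} (hμ : IsMatching (fun _ => 1) μ)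
    {z x i : I} {b : O} (hz : μ z = none)
    (hx : μ x = some (objOfIdx 0 (Fintype.card_pos_iff.2 ⟨b⟩))) (hb : objIdx b < k) (hix : i ≠ x) (hi : i = z ∨ μ i ≠ none) :
    Prefers (cutoffPref k) (promote μ z b i) (μ i) := by
  by_cases hiz : i = z
  · rw [hiz, hz, promote, if_pos rfl, prefers_cutoffPref_some_none]
    exact hb
  obtain ⟨a, ha⟩ := Option.ne_none_iff_exists'.1 (hi.resolve_left hiz)
  have ha0 : objIdx a ≠ 0 := fun h0 => hix (isMatching_one_iff.1 hμ i x _ ha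
    (hx.trans (congrArg some (objIdx_injective (by simp [h0])))))
  obtain ⟨c, hc⟩ := Option.ne_none_iff_exists'.1 (mt objPred_eq_none_iff.1 ha0)
  rw [promote, if_neg hiz, ha, Option.bind_some, hc, prefers_cutoffPref_some_some]
  have := objIdx_add_one_of_objPred hc
  omega

@[reducible]
noncomputable def cutoffProfile (T : Finset I) (k : ℕ) : I → LinearOrder (Option O) :=
  fun i => cutoffPref (if i ∈ T then k else 0)

variable {w : I → ℝ} {T : Finset I} {k : ℕ} {μ : I → Option O}

theorem WPopular.mem_of_cutoffProfile (hw : ∀ i, 0 < w i)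
    (hμ : WPopular w (cutoffProfile T k) (fun _ => 1) μ) {i : I} {a : O} (hia : μ i = some a) :
    i ∈ T ∧ objIdx a < k := by
  have := hμ.not_prefers_none hw i
  rw [hia, cutoffProfile, prefers_cutoffPref_none_some] at this
  split_ifs at this with hi
  · exact ⟨hi, by omega⟩
  · omega

theorem WPopular.exists_eq_some_of_cutoffProfile (hw : ∀ i, 0 < w i)
    (hμ : WPopular w (cutoffProfile T k) (fun _ => 1) μ) {z : I} (hzT : z ∈ T) (hz : μ z = none)
    {a : O} (ha : objIdx a < k) : ∃ i, μ i = some a := by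
  by_contra! hfree
  refine hμ.nonWasteful hw z a (by simp [hfree]) ?_
  rw [hz, cutoffProfile, if_pos hzT, prefers_cutoffPref_some_none]
  exact ha

theorem not_wPopular_cutoffProfile (hw : ∀ i, 0 < w i) (hT : #T = k + 1)
    (hk : k ≤ Fintype.card O) (hlight : ∀ x ∈ T, w x < ∑ i ∈ T.erase x, w i) (μ : I → Option O) :
    ¬ WPopular w (cutoffProfile T k) (fun _ => 1) μ := by
  intro hμ
  have hIR := fun i a (h : μ i = some a) => hμ.mem_of_cutoffProfile hw h
  obtain ⟨z, hzT, hz, hassigned⟩ := exists_unique_unassigned hμ.1 (S := {a | objIdx a < k})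
    (by rw [card_objIdx_lt hk, hT]) (by simpa using hIR)
    (by simpa using fun z hzT hz a => hμ.exists_eq_some_of_cutoffProfile hw hzT hz (a := a))
  have hk0 : 0 < k := by
    by_contra! h0
    have := hlight z hzT
    rw [(card_eq_zero (s := T.erase z)).1 (by rw [card_erase_of_mem hzT]; omega), sum_empty]
      at this
    linarith [hw z]
  obtain ⟨x, hx⟩ := hμ.exists_eq_some_of_cutoffProfile hw hzT hz
    (a := objOfIdx 0 (by omega)) (by simp [hk0])
  set b := objOfIdx (k - 1) (by omega : k - 1 < Fintype.card O)
  refine hμ.2 (promote μ z b) (isMatching_promote hμ.1 z fun i a ha => ?_) ?_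
  · simp only [b, objIdx_objOfIdx]
    have := (hIR i a ha).2
    omega
  have hwin : ∀ i ∈ T.erase x, Prefers (cutoffProfile T k i) (promote μ z b i) (μ i) := by
    intro i hi
    obtain ⟨hix, hiT⟩ := mem_erase.1 hi
    rw [cutoffProfile, if_pos hiT]
    refine prefers_cutoffPref_promote hμ.1 hz hx (by simp only [b, objIdx_objOfIdx]; omega) hix ?_
    by_cases hiz : i = z
    exacts [Or.inl hiz, Or.inr (hassigned i hiT hiz)]
  refine moreWPopular_of_sum_lt (fun i => (hw i).le) hwin (L := {x}) (fun i hix => ?_) ?_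
  · by_cases hiT : i ∈ T
    · exact (hwin i (mem_erase.2 ⟨by simpa using hix, hiT⟩)).asymm
    · have hiz : i ≠ z := fun h => hiT (h ▸ hzT)
      have hμi : μ i = none := Option.eq_none_iff_forall_ne_some.2 fun a ha => hiT (hIR i a ha).1
      rw [promote, if_neg hiz, hμi, Option.bind_none]
      exact Prefers.irrefl _ _
  · rw [sum_singleton]
    exact hlight x (hIR x _ hx).1

end Gadget

theorem stmt4_general {I O : Type} [Fintype I] [Fintype O]
    (hIO : Fintype.card I ≤ Fintype.card O)
    (w : I → ℝ) (hw : ∀ i, 0 < w i)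
    (e : Fin (Fintype.card I) ≃ I) (he : DecreasingEnum w e)
    (hco : ¬ CumulativelyOrdered w e) :
    ∃ (P : I → LinearOrder (Option O)) (q : O → ℕ), ValidCaps q ∧
      ∀ μ : I → Option O, ¬ WPopular w P q μ := by
  obtain ⟨j, hj⟩ := not_forall.1 hco
  rw [not_le, filter_lt_eq_Ioi] at hj
  set T := (Ici j).map e.toEmbedding
  have hsumT : ∑ i ∈ T, w i = w (e j) + ∑ l ∈ Ioi j, w (e l) := by
    rw [sum_map, Ici_eq_cons_Ioi, sum_cons]
    rfl
  refine ⟨_, _, fun _ => le_rfl,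
    not_wPopular_cutoffProfile hw (T := T) (k := Fintype.card I - j - 1) ?_ (by omega) ?_⟩
  · rw [card_map, Fin.card_Ici]
    omega
  · intro x hx
    obtain ⟨l, hl, rfl⟩ := mem_map.1 hx
    rw [sum_erase_eq_sub hx, hsumT, Equiv.coe_toEmbedding]
    linarith [he j l (mem_Ici.1 hl)]

/-- If the weights are not cumulatively ordered, some problem has no
w-popular matching. -/
theorem stmt4 {I O : Type} [Fintype I] [Fintype O]
    (hI : 3 ≤ Fintype.card I) (hIO : Fintype.card I ≤ Fintype.card O)
    (w : I → ℝ) (hw : ∀ i, 0 < w i)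
    (e : Fin (Fintype.card I) ≃ I) (he : DecreasingEnum w e)
    (hco : ¬ CumulativelyOrdered w e) :
    ∃ (P : I → LinearOrder (Option O)) (q : O → ℕ), ValidCaps q ∧
      ∀ μ : I → Option O, ¬ WPopular w P q μ :=
  stmt4_general hIO w hw e he hco
end

section
/- A popular matching may not exist: there exists a problem (P, q) for which no popular matching exists. -/
open scoped Classical

/-! Let every agent rank `a ≻ b ≻ c` above everything else, with `a`, `b`, `c` of capacity one.
A popular matching is non-wasteful; since at least three agents are present, some agent holds
neither `a` nor `b` and would take `b` or `c` if it were free, so both are assigned. But then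
the rotation `a ↦ c`, `b ↦ a`, `c ↦ b` makes the holders of `b` and `c` better off and only the
holder of `a` worse off: the preferences form a Condorcet cycle. -/

namespace Prefers

variable {O : Type} {p : LinearOrder (Option O)} {x y z : Option O}

lemma trans (hxy : Prefers p x y) (hyz : Prefers p y z) : Prefers p x z :=
  letI := p; lt_trans hyz hxy

lemma asymm_s6 (h : Prefers p x y) : ¬ Prefers p y x :=
  letI := p; lt_asymm h

lemma irrefl_s6 (x : Option O) : ¬ Prefers p x x :=
  letI := p; lt_irrefl x

lemma le (h : Prefers p x y) : p.le y x :=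
  letI := p; le_of_lt h

lemma not_iff_le : ¬ Prefers p x y ↔ p.le x y :=
  letI := p; not_lt

end Prefers

section Popularity

variable {I O : Type} [Fintype I]
  {P : I → LinearOrder (Option O)} {q : O → ℕ} {μ μ' : I → Option O}

noncomputable def holders (μ : I → Option O) (a : O) : Finset I :=
  Finset.univ.filter fun i : I => μ i = some a

lemma mem_holders {a : O} {i : I} : i ∈ holders μ a ↔ μ i = some a := by
  simp [holders]

lemma IsMatching.card_holders_le (hμ : IsMatching q μ) (a : O) : (holders μ a).card ≤ q a :=
  hμ a

lemma ParetoImproves.morePopular (h : ParetoImproves P μ' μ) : MorePopular P μ' μ := by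
  obtain ⟨hle, j, hj⟩ := h
  have hworse : (Finset.univ.filter fun i : I => Prefers (P i) (μ i) (μ' i)) = ∅ :=
    Finset.filter_eq_empty_iff.2 fun i _ => Prefers.not_iff_le.2 (hle i)
  unfold MorePopular
  rw [hworse, Finset.card_empty, Finset.card_pos]
  exact ⟨j, Finset.mem_filter.2 ⟨Finset.mem_univ j, hj⟩⟩

lemma IsMatching.update (hμ : IsMatching q μ) {a : O} (ha : (holders μ a).card < q a) (i : I) :
    IsMatching q (Function.update μ i (some a)) := by
  intro b
  have hsub : holders (Function.update μ i (some a)) b ⊆ insert i (holders μ b) := by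
    intro j hj
    by_cases hji : j = i
    · simp [hji]
    · simpa [mem_holders, hji] using hj
  by_cases hba : b = a
  · subst hba
    calc _ ≤ (insert i (holders μ b)).card := Finset.card_le_card hsub
      _ ≤ (holders μ b).card + 1 := Finset.card_insert_le _ _
      _ ≤ q b := ha
  · refine le_trans (Finset.card_le_card fun j hj => ?_) (hμ b)
    rcases Finset.mem_insert.1 (hsub hj) with rfl | hj'
    · simp [Ne.symm hba] at hj
    · exact hj'

lemma Popular.nonWasteful (h : Popular P q μ) : NonWasteful P q μ := by
  intro i a ha hpref
  refine h.2 _ (h.1.update ha i)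
    (ParetoImproves.morePopular ⟨fun j => ?_, i, by simpa using hpref⟩)
  by_cases hji : j = i
  · subst hji
    simpa using hpref.le
  · simp [hji]

lemma NonWasteful.exists_holder (h : NonWasteful P q μ) {x : O} (hx : 0 < q x) {j : I}
    (hpref : Prefers (P j) (some x) (μ j)) : ∃ i, μ i = some x := by
  by_contra hfree
  have hempty : holders μ x = ∅ := Finset.eq_empty_of_forall_notMem fun i hi =>
    hfree ⟨i, mem_holders.1 hi⟩
  refine h j x ?_ hpref
  show (holders μ x).card < q x
  rwa [hempty, Finset.card_empty]

lemma IsMatching.map_equiv (hμ : IsMatching q μ) (σ : O ≃ O) (hq : ∀ a, q (σ a) = q a) :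
    IsMatching q fun i => (μ i).map σ := by
  intro a
  have hholders : holders (fun i => (μ i).map σ) a = holders μ (σ.symm a) := by
    ext i
    simp [mem_holders, Option.map_eq_some_iff, ← Equiv.eq_symm_apply]
  have hqa : q (σ.symm a) = q a := by simpa using (hq (σ.symm a)).symm
  show (holders _ a).card ≤ q a
  rw [hholders, ← hqa]
  exact hμ.card_holders_le _

lemma IsMatching.exists_ne_some_ne_some (hμ : IsMatching q μ) {a b : O} (ha : q a ≤ 1)
    (hb : q b ≤ 1) (hI : 2 < Fintype.card I) : ∃ j, μ j ≠ some a ∧ μ j ≠ some b := by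
  have hcard : (holders μ a ∪ holders μ b).card < (Finset.univ : Finset I).card :=
    calc _ ≤ (holders μ a).card + (holders μ b).card := Finset.card_union_le _ _
      _ ≤ 2 := by linarith [hμ.card_holders_le a, hμ.card_holders_le b]
      _ < _ := hI
  obtain ⟨j, -, hj⟩ := Finset.exists_mem_notMem_of_card_lt_card hcard
  simp only [Finset.mem_union, mem_holders, not_or] at hj
  exact ⟨j, hj⟩

end Popularity

section TopThree

variable {O : Type}

structure IsTopThree (p : LinearOrder (Option O)) (a b c : O) : Prop where
  prefers_ab : Prefers p (some a) (some b)
  prefers_bc : Prefers p (some b) (some c)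
  prefers_c : ∀ v, v ≠ some a → v ≠ some b → v ≠ some c → Prefers p (some c) v

noncomputable def cycle (a b c : O) : O ≃ O :=
  (Equiv.swap a c).trans (Equiv.swap a b)

lemma cycle_apply_of_ne {a b c o : O} (ha : o ≠ a) (hb : o ≠ b) (hc : o ≠ c) :
    cycle a b c o = o := by
  simp [cycle, Equiv.swap_apply_of_ne_of_ne, ha, hb, hc]

lemma cycle_apply_b {a b c : O} (hab : a ≠ b) (hbc : b ≠ c) : cycle a b c b = a := by
  simp [cycle, Equiv.swap_apply_of_ne_of_ne hab.symm hbc]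

lemma cycle_apply_c (a b c : O) : cycle a b c c = b := by
  simp [cycle]

lemma apply_cycle_eq {β : Type} {f : O → β} {a b c : O} (hab : f a = f b) (hbc : f b = f c)
    (o : O) : f (cycle a b c o) = f o := by
  simp only [cycle, Equiv.trans_apply, Equiv.swap_apply_def]
  split_ifs <;> simp_all

namespace IsTopThree

variable {p : LinearOrder (Option O)} {a b c : O}

lemma ne_ab (h : IsTopThree p a b c) : a ≠ b := by
  rintro rfl
  exact Prefers.irrefl_s6 _ h.prefers_ab

lemma ne_bc (h : IsTopThree p a b c) : b ≠ c := by
  rintro rfl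
  exact Prefers.irrefl_s6 _ h.prefers_bc

lemma prefers_b (h : IsTopThree p a b c) {v : Option O} (ha : v ≠ some a) (hb : v ≠ some b) :
    Prefers p (some b) v := by
  by_cases hc : v = some c
  · exact hc ▸ h.prefers_bc
  · exact h.prefers_bc.trans (h.prefers_c v ha hb hc)

lemma not_prefers_map_cycle (h : IsTopThree p a b c) {v : Option O} (ha : v ≠ some a) :
    ¬ Prefers p v (v.map (cycle a b c)) := by
  rcases v with _ | o
  · exact Prefers.irrefl_s6 _
  · by_cases hb : o = b
    · subst hb
      simpa [cycle_apply_b h.ne_ab h.ne_bc] using h.prefers_ab.asymm_s6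
    by_cases hc : o = c
    · subst hc
      simpa [cycle_apply_c] using h.prefers_bc.asymm_s6
    simpa [cycle_apply_of_ne (by simpa using ha) hb hc] using Prefers.irrefl_s6 _

end IsTopThree

variable {I : Type} [Fintype I] {P : I → LinearOrder (Option O)} {q : O → ℕ} {μ : I → Option O}
  {a b c : O}

lemma morePopular_map_cycle (hP : ∀ i, IsTopThree (P i) a b c) (hμ : IsMatching q μ)
    (hqa : q a ≤ 1) {ib ic : I} (hib : μ ib = some b) (hic : μ ic = some c) :
    MorePopular P (fun i => (μ i).map (cycle a b c)) μ := by
  have hworse : (Finset.univ.filter fun i : I =>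
      Prefers (P i) (μ i) ((μ i).map (cycle a b c))) ⊆ holders μ a := by
    intro i hi
    by_contra hne
    exact (hP i).not_prefers_map_cycle (mt mem_holders.2 hne) (Finset.mem_filter.1 hi).2
  have hbetter : ({ib, ic} : Finset I) ⊆ Finset.univ.filter fun i : I =>
      Prefers (P i) ((μ i).map (cycle a b c)) (μ i) := by
    intro i hi
    rcases Finset.mem_insert.1 hi with rfl | hi
    · simpa [hib, cycle_apply_b (hP i).ne_ab (hP i).ne_bc] using (hP i).prefers_ab
    · rw [Finset.mem_singleton.1 hi]
      simpa [hic, cycle_apply_c] using (hP ic).prefers_bc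
  have hne : ib ≠ ic := by
    rintro rfl
    exact (hP ib).ne_bc (Option.some.inj (hib.symm.trans hic))
  unfold MorePopular
  calc _ ≤ (holders μ a).card := Finset.card_le_card hworse
    _ ≤ 1 := (hμ.card_holders_le a).trans hqa
    _ < ({ib, ic} : Finset I).card := by rw [Finset.card_pair hne]; norm_num
    _ ≤ _ := Finset.card_le_card hbetter

lemma Popular.exists_holders_of_isTopThree (hP : ∀ i, IsTopThree (P i) a b c)
    (hμ : Popular P q μ) (hqa : q a = 1) (hqb : q b = 1) (hqc : q c = 1)
    (hI : 2 < Fintype.card I) : (∃ i, μ i = some b) ∧ ∃ i, μ i = some c := by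
  obtain ⟨j, hja, hjb⟩ := hμ.1.exists_ne_some_ne_some hqa.le hqb.le hI
  refine ⟨hμ.nonWasteful.exists_holder (by omega) ((hP j).prefers_b hja hjb), ?_⟩
  by_cases hjc : μ j = some c
  · exact ⟨j, hjc⟩
  · exact hμ.nonWasteful.exists_holder (by omega) ((hP j).prefers_c _ hja hjb hjc)

theorem not_popular_of_isTopThree (hP : ∀ i, IsTopThree (P i) a b c)
    (hqa : q a = 1) (hqb : q b = 1) (hqc : q c = 1) (hI : 2 < Fintype.card I)
    (μ : I → Option O) : ¬ Popular P q μ := by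
  intro hμ
  obtain ⟨⟨ib, hib⟩, ic, hic⟩ := hμ.exists_holders_of_isTopThree hP hqa hqb hqc hI
  have hq : ∀ o, q (cycle a b c o) = q o :=
    apply_cycle_eq (hqa.trans hqb.symm) (hqb.trans hqc.symm)
  exact hμ.2 _ (hμ.1.map_equiv _ hq) (morePopular_map_cycle hP hμ.1 hqa.le hib hic)

end TopThree

noncomputable abbrev scoreOrder {α : Type} [Fintype α] (s : α → ℕ) : LinearOrder α :=
  LinearOrder.lift' (fun v => toLex (s v, Fintype.equivFin α v)) fun _ _ h =>
    (Fintype.equivFin α).injective (Prod.ext_iff.1 (toLex.injective h)).2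

lemma prefers_scoreOrder {O : Type} [Fintype O] {s : Option O → ℕ} {x y : Option O}
    (h : s y < s x) : Prefers (scoreOrder s) x y :=
  Prod.Lex.toLex_lt_toLex.2 (Or.inl h)

noncomputable def topThreeScore {O : Type} (a b c : O) (v : Option O) : ℕ :=
  if v = some a then 3 else if v = some b then 2 else if v = some c then 1 else 0

lemma isTopThree_scoreOrder_topThreeScore {O : Type} [Fintype O] {a b c : O} (hab : a ≠ b)
    (hac : a ≠ c) (hbc : b ≠ c) : IsTopThree (scoreOrder (topThreeScore a b c)) a b c where
  prefers_ab := prefers_scoreOrder (by simp [topThreeScore, hab.symm])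
  prefers_bc := prefers_scoreOrder (by simp [topThreeScore, hab.symm, hac.symm, hbc.symm])
  prefers_c v ha hb hc :=
    prefers_scoreOrder (by simp [topThreeScore, ha, hb, hc, hac.symm, hbc.symm])

/-- A popular matching may not exist. -/
theorem stmt6 {I O : Type} [Fintype I] [Fintype O]
    (hI : 3 ≤ Fintype.card I) (hIO : Fintype.card I ≤ Fintype.card O) :
    ∃ (P : I → LinearOrder (Option O)) (q : O → ℕ), ValidCaps q ∧
      ∀ μ : I → Option O, ¬ Popular P q μ := by
  obtain ⟨a, b, c, hab, hac, hbc⟩ := Fintype.two_lt_card_iff.1 (lt_of_lt_of_le hI hIO)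
  exact ⟨fun _ => scoreOrder (topThreeScore a b c), fun _ => 1, fun _ => le_rfl,
    not_popular_of_isTopThree (fun _ => isTopThree_scoreOrder_topThreeScore hab hac hbc)
      rfl rfl rfl hI⟩
end

section
/- If the weight profile w is neither distinct nor essentially distinct, then no mechanism is both w-popular and strategy-proof. -/
open scoped Classical

section Aux

open Finset

variable {I O : Type} [Fintype I] [Fintype O]

/-! ### Rank-based preference orders -/

noncomputable def gG : O → ℕ := fun o => ((Fintype.equivFin O) o : ℕ)

lemma gG_lt (o : O) : gG o < Fintype.card O := (Fintype.equivFin O o).isLt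

lemma gG_inj : Function.Injective (gG (O := O)) := fun o o' h =>
  (Fintype.equivFin O).injective (Fin.val_injective h)

noncomputable def rkA (a : O) : Option O → ℕ
  | none => Fintype.card O
  | some o => if o = a then Fintype.card O + 2 else gG o

noncomputable def rkAB (a b : O) : Option O → ℕ
  | none => Fintype.card O
  | some o => if o = a then Fintype.card O + 3 else if o = b then Fintype.card O + 1 else gG o

noncomputable def rk0 : Option O → ℕ
  | none => Fintype.card O
  | some o => gG o

lemma rkA_none (a : O) : rkA a none = Fintype.card O := rfl
lemma rkA_self (a : O) : rkA a (some a) = Fintype.card O + 2 := by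
  show (if a = a then _ else _) = _; rw [if_pos rfl]
lemma rkA_other {a o : O} (h : o ≠ a) : rkA a (some o) = gG o := by
  show (if o = a then _ else _) = _; rw [if_neg h]
lemma rkAB_none (a b : O) : rkAB a b none = Fintype.card O := rfl
lemma rkAB_self (a b : O) : rkAB a b (some a) = Fintype.card O + 3 := by
  show (if a = a then _ else _) = _; rw [if_pos rfl]
lemma rkAB_snd {a b : O} (hab : a ≠ b) : rkAB a b (some b) = Fintype.card O + 1 := by
  show (if b = a then _ else _) = _; rw [if_neg (Ne.symm hab), if_pos rfl]
lemma rkAB_other {a b o : O} (h1 : o ≠ a) (h2 : o ≠ b) : rkAB a b (some o) = gG o := by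
  show (if o = a then _ else _) = _; rw [if_neg h1, if_neg h2]
lemma rk0_none : rk0 (none : Option O) = Fintype.card O := rfl
lemma rk0_some (o : O) : rk0 (some o) = gG o := rfl

lemma rkA_le (a : O) (v : Option O) : rkA a v ≤ Fintype.card O + 2 := by
  cases v with
  | none => rw [rkA_none]; omega
  | some o =>
    rcases eq_or_ne o a with rfl | h
    · rw [rkA_self]
    · rw [rkA_other h]; have := gG_lt o; omega

lemma rkAB_le (a b : O) (v : Option O) : rkAB a b v ≤ Fintype.card O + 3 := by
  cases v with
  | none => rw [rkAB_none]; omega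
  | some o =>
    rcases eq_or_ne o a with rfl | h1
    · rw [rkAB_self]
    · rcases eq_or_ne o b with rfl | h2
      · rcases eq_or_ne a o with rfl | hab
        · rw [rkAB_self]
        · rw [rkAB_snd hab]; omega
      · rw [rkAB_other h1 h2]; have := gG_lt o; omega

lemma rkA_inj (a : O) : Function.Injective (rkA a) := by
  have hca := gG_lt (O := O)
  intro u v h
  cases u with
  | none =>
    cases v with
    | none => rfl
    | some o =>
      exfalso; rw [rkA_none] at h
      rcases eq_or_ne o a with rfl | ho
      · rw [rkA_self] at h; omega
      · rw [rkA_other ho] at h; have := hca o; omega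
  | some o =>
    cases v with
    | none =>
      exfalso; rw [rkA_none] at h
      rcases eq_or_ne o a with rfl | ho
      · rw [rkA_self] at h; omega
      · rw [rkA_other ho] at h; have := hca o; omega
    | some o' =>
      rcases eq_or_ne o a with ho | ho <;> rcases eq_or_ne o' a with ho' | ho'
      · rw [ho, ho']
      · rw [ho, rkA_self, rkA_other ho'] at h; have := hca o'; omega
      · rw [ho', rkA_self, rkA_other ho] at h; have := hca o; omega
      · rw [rkA_other ho, rkA_other ho'] at h; exact congrArg some (gG_inj h)

lemma rkAB_inj (a b : O) : Function.Injective (rkAB a b) := by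
  have hca := gG_lt (O := O)
  have hclass : ∀ o : O, rkAB a b (some o) = Fintype.card O + 3 ∨
      rkAB a b (some o) = Fintype.card O + 1 ∨
      (rkAB a b (some o) = gG o ∧ rkAB a b (some o) < Fintype.card O) := by
    intro o
    rcases eq_or_ne o a with hoa | hoa
    · left; rw [hoa, rkAB_self]
    · rcases eq_or_ne o b with hob | hob
      · rcases eq_or_ne a b with hab | hab
        · left; rw [hob, ← hab, rkAB_self]
        · right; left; rw [hob, rkAB_snd hab]
      · right; right
        rw [rkAB_other hoa hob]
        exact ⟨rfl, gG_lt o⟩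
  have huniq3 : ∀ o : O, rkAB a b (some o) = Fintype.card O + 3 → o = a := by
    intro o h
    by_contra hc
    rcases eq_or_ne o b with hob | hob
    · have hba : a ≠ b := fun hh => hc (by rw [hob, hh])
      rw [hob, rkAB_snd hba] at h; omega
    · rw [rkAB_other hc hob] at h; have := hca o; omega
  have huniq1 : ∀ o : O, rkAB a b (some o) = Fintype.card O + 1 → o = b := by
    intro o h
    by_contra hc
    rcases eq_or_ne o a with hoa | hoa
    · rw [hoa, rkAB_self] at h; omega
    · rw [rkAB_other hoa hc] at h; have := hca o; omega
  intro u v h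
  cases u with
  | none =>
    cases v with
    | none => rfl
    | some o =>
      exfalso; rw [rkAB_none] at h
      rcases hclass o with h' | h' | ⟨_, h'⟩ <;> rw [← h] at h' <;> omega
  | some o =>
    cases v with
    | none =>
      exfalso; rw [rkAB_none] at h
      rcases hclass o with h' | h' | ⟨_, h'⟩ <;> rw [h] at h' <;> omega
    | some o' =>
      rcases hclass o with h1 | h1 | ⟨h1, h1'⟩ <;> rcases hclass o' with h2 | h2 | ⟨h2, h2'⟩
      · rw [(huniq3 o h1).trans (huniq3 o' h2).symm]
      · rw [h1, h2] at h; omega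
      · rw [h1] at h; rw [← h] at h2'; omega
      · rw [h1, h2] at h; omega
      · rw [(huniq1 o h1).trans (huniq1 o' h2).symm]
      · rw [h1] at h; rw [← h] at h2'; omega
      · rw [h2] at h; rw [h] at h1'; omega
      · rw [h2] at h; rw [h] at h1'; omega
      · rw [h1, h2] at h; exact congrArg some (gG_inj h)

lemma rk0_inj : Function.Injective (rk0 (O := O)) := by
  intro u v h
  cases u with
  | none =>
    cases v with
    | none => rfl
    | some o => exact absurd h.symm (Nat.ne_of_lt (gG_lt o))
  | some o =>
    cases v with
    | none => exact absurd h (Nat.ne_of_lt (gG_lt o))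
    | some o' => exact congrArg some (gG_inj h)

noncomputable def ordA (a : O) : LinearOrder (Option O) := LinearOrder.lift' (rkA a) (rkA_inj a)
noncomputable def ordAB (a b : O) : LinearOrder (Option O) :=
  LinearOrder.lift' (rkAB a b) (rkAB_inj a b)
noncomputable def ord0 : LinearOrder (Option O) := LinearOrder.lift' rk0 rk0_inj

lemma prefers_ordA {a : O} {u v : Option O} : Prefers (ordA a) u v ↔ rkA a v < rkA a u :=
  Iff.rfl
lemma prefers_ordAB {a b : O} {u v : Option O} :
    Prefers (ordAB a b) u v ↔ rkAB a b v < rkAB a b u := Iff.rfl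
lemma prefers_ord0 {u v : Option O} : Prefers (ord0 (O := O)) u v ↔ rk0 v < rk0 u := Iff.rfl

/-- nothing beats `a` under `ordA a` -/
lemma pA_top {a : O} (v : Option O) : ¬ Prefers (ordA a) v (some a) := by
  rw [prefers_ordA, rkA_self]
  have := rkA_le a v
  omega

lemma pA_best {a : O} {v : Option O} : Prefers (ordA a) (some a) v ↔ v ≠ some a := by
  rw [prefers_ordA, rkA_self]
  constructor
  · intro h hc; rw [hc, rkA_self] at h; omega
  · intro h
    cases v with
    | none => rw [rkA_none]; omega
    | some o =>
      have ho : o ≠ a := fun hc => h (by rw [hc])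
      rw [rkA_other ho]; have := gG_lt o; omega

lemma pA_none {a : O} {v : Option O} : Prefers (ordA a) v none ↔ v = some a := by
  rw [prefers_ordA, rkA_none]
  constructor
  · intro h
    cases v with
    | none => exfalso; rw [rkA_none] at h; omega
    | some o =>
      by_contra hc
      have ho : o ≠ a := fun hh => hc (by rw [hh])
      rw [rkA_other ho] at h; have := gG_lt o; omega
  · intro h; rw [h, rkA_self]; omega

lemma pAB_top {a b : O} (v : Option O) : ¬ Prefers (ordAB a b) v (some a) := by
  rw [prefers_ordAB, rkAB_self]
  have := rkAB_le a b v
  omega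

lemma pAB_a {a b : O} {v : Option O} : Prefers (ordAB a b) (some a) v ↔ v ≠ some a := by
  rw [prefers_ordAB, rkAB_self]
  constructor
  · intro h hc; rw [hc, rkAB_self] at h; omega
  · intro h
    cases v with
    | none => rw [rkAB_none]; omega
    | some o =>
      have ho : o ≠ a := fun hc => h (by rw [hc])
      rcases eq_or_ne o b with rfl | ho2
      · rw [rkAB_snd (Ne.symm ho)]; omega
      · rw [rkAB_other ho ho2]; have := gG_lt o; omega

lemma pAB_vb {a b : O} (hab : a ≠ b) {v : Option O} :
    Prefers (ordAB a b) v (some b) ↔ v = some a := by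
  rw [prefers_ordAB, rkAB_snd hab]
  constructor
  · intro h
    cases v with
    | none => exfalso; rw [rkAB_none] at h; omega
    | some o =>
      by_contra hc
      have ho : o ≠ a := fun hh => hc (by rw [hh])
      rcases eq_or_ne o b with rfl | ho2
      · rw [rkAB_snd hab] at h; omega
      · rw [rkAB_other ho ho2] at h; have := gG_lt o; omega
  · intro h; rw [h, rkAB_self]; omega

lemma pAB_b {a b : O} (hab : a ≠ b) {v : Option O} :
    Prefers (ordAB a b) (some b) v ↔ (v ≠ some a ∧ v ≠ some b) := by
  rw [prefers_ordAB, rkAB_snd hab]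
  constructor
  · intro h
    constructor
    · intro hc; rw [hc, rkAB_self] at h; omega
    · intro hc; rw [hc, rkAB_snd hab] at h; omega
  · rintro ⟨h1, h2⟩
    cases v with
    | none => rw [rkAB_none]; omega
    | some o =>
      have ho1 : o ≠ a := fun hc => h1 (by rw [hc])
      have ho2 : o ≠ b := fun hc => h2 (by rw [hc])
      rw [rkAB_other ho1 ho2]; have := gG_lt o; omega

lemma pAB_none {a b : O} (hab : a ≠ b) {v : Option O} :
    Prefers (ordAB a b) v none ↔ (v = some a ∨ v = some b) := by
  rw [prefers_ordAB, rkAB_none]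
  constructor
  · intro h
    cases v with
    | none => exfalso; rw [rkAB_none] at h; omega
    | some o =>
      rcases eq_or_ne o a with rfl | ho1
      · left; rfl
      · rcases eq_or_ne o b with rfl | ho2
        · right; rfl
        · exfalso; rw [rkAB_other ho1 ho2] at h; have := gG_lt o; omega
  · rintro (h | h) <;> rw [h]
    · rw [rkAB_self]; omega
    · rw [rkAB_snd hab]; omega

lemma p0_not {v : Option O} : ¬ Prefers (ord0 (O := O)) v none := by
  rw [prefers_ord0, rk0_none]
  cases v with
  | none => rw [rk0_none]; omega
  | some o => rw [rk0_some]; have := gG_lt o; omega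

end Aux
section Aux2

open Finset

variable {I O : Type} [Fintype I] [Fintype O]

noncomputable def triFun {α : Type*} (x y z : I) (vx vy vz d : α) : I → α :=
  fun l => if l = x then vx else if l = y then vy else if l = z then vz else d

variable {α : Type*} {x y z : I} {vx vy vz d : α}

lemma triFun_x : triFun x y z vx vy vz d x = vx := by simp [triFun]

lemma triFun_y (h : x ≠ y) : triFun x y z vx vy vz d y = vy := by
  simp [triFun, Ne.symm h]

lemma triFun_z (h1 : x ≠ z) (h2 : y ≠ z) : triFun x y z vx vy vz d z = vz := by
  simp [triFun, Ne.symm h1, Ne.symm h2]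

lemma triFun_other {l : I} (h1 : l ≠ x) (h2 : l ≠ y) (h3 : l ≠ z) :
    triFun x y z vx vy vz d l = d := by simp [triFun, h1, h2, h3]

lemma triFun_swap12 (h : x ≠ y) : triFun x y z vx vy vz d = triFun y x z vy vx vz d := by
  funext l
  rcases eq_or_ne l x with rfl | h1
  · rw [triFun_x, triFun_y (Ne.symm h)]
  · rcases eq_or_ne l y with rfl | h2
    · rw [triFun_y h, triFun_x]
    · simp [triFun, h1, h2]

lemma triFun_swap23 (h : y ≠ z) : triFun x y z vx vy vz d = triFun x z y vx vz vy d := by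
  funext l
  rcases eq_or_ne l x with rfl | h1
  · rw [triFun_x, triFun_x]
  · rcases eq_or_ne l y with rfl | h2
    · simp [triFun, h1, h]
    · rcases eq_or_ne l z with rfl | h3
      · simp [triFun, h1, Ne.symm h]
      · simp [triFun, h1, h2, h3]

lemma update_triFun_x {v : α} :
    Function.update (triFun x y z vx vy vz d) x v = triFun x y z v vy vz d := by
  funext l
  rcases eq_or_ne l x with rfl | h1
  · rw [Function.update_self, triFun_x]
  · rw [Function.update_of_ne h1]
    simp [triFun, h1]

lemma update_triFun_y {v : α} (h : x ≠ y) :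
    Function.update (triFun x y z vx vy vz d) y v = triFun x y z vx v vz d := by
  funext l
  rcases eq_or_ne l y with rfl | h1
  · rw [Function.update_self, triFun_y h]
  · rw [Function.update_of_ne h1]
    simp [triFun, h1]

lemma update_triFun_z {v : α} (h1 : x ≠ z) (h2 : y ≠ z) :
    Function.update (triFun x y z vx vy vz d) z v = triFun x y z vx vy v d := by
  funext l
  rcases eq_or_ne l z with rfl | h3
  · rw [Function.update_self, triFun_z h1 h2]
  · rw [Function.update_of_ne h3]
    simp [triFun, h3]

/-! ### matchings -/

lemma matching_unique {q : O → ℕ} {μ : I → Option O} (hμ : IsMatching q μ) {c : O}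
    (hq : q c = 1) {i j : I} (hi : μ i = some c) (hj : μ j = some c) : i = j := by
  by_contra hij
  have hsub : ({i, j} : Finset I) ⊆ Finset.univ.filter fun k : I => μ k = some c := by
    intro k hk
    rcases Finset.mem_insert.1 hk with rfl | hk
    · exact Finset.mem_filter.2 ⟨Finset.mem_univ _, hi⟩
    · rw [Finset.mem_singleton.1 hk]
      exact Finset.mem_filter.2 ⟨Finset.mem_univ _, hj⟩
  have h2 : ({i, j} : Finset I).card = 2 := Finset.card_pair hij
  have := (Finset.card_le_card hsub).trans (hμ c)
  rw [h2, hq] at this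
  omega

lemma isMatching_tri (hxy : x ≠ y) (hxz : x ≠ z) (hyz : y ≠ z)
    {vx vy vz : Option O}
    (h1 : vx ≠ vy ∨ vx = none) (h2 : vx ≠ vz ∨ vx = none) (h3 : vy ≠ vz ∨ vy = none) :
    IsMatching (fun _ => 1) (triFun x y z vx vy vz none) := by
  intro c
  rw [Finset.card_le_one]
  intro i hi j hj
  rw [Finset.mem_filter] at hi hj
  have hval : ∀ k : I, triFun x y z vx vy vz (none : Option O) k = some c →
      (k = x ∧ vx = some c) ∨ (k = y ∧ vy = some c) ∨ (k = z ∧ vz = some c) := by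
    intro k hk
    rcases eq_or_ne k x with rfl | e1
    · rw [triFun_x] at hk; exact Or.inl ⟨rfl, hk⟩
    · rcases eq_or_ne k y with rfl | e2
      · rw [triFun_y hxy] at hk; exact Or.inr (Or.inl ⟨rfl, hk⟩)
      · rcases eq_or_ne k z with rfl | e3
        · rw [triFun_z hxz hyz] at hk; exact Or.inr (Or.inr ⟨rfl, hk⟩)
        · rw [triFun_other e1 e2 e3] at hk; exact absurd hk (by simp)
  rcases hval i hi.2 with ⟨rfl, ei⟩ | ⟨rfl, ei⟩ | ⟨rfl, ei⟩ <;>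
    rcases hval j hj.2 with ⟨rfl, ej⟩ | ⟨rfl, ej⟩ | ⟨rfl, ej⟩ <;> (try rfl) <;> exfalso
  · rcases h1 with h | h
    · exact h (ei.trans ej.symm)
    · rw [h] at ei; cases ei
  · rcases h2 with h | h
    · exact h (ei.trans ej.symm)
    · rw [h] at ei; cases ei
  · rcases h1 with h | h
    · exact h (ej.trans ei.symm)
    · rw [h] at ej; cases ej
  · rcases h3 with h | h
    · exact h (ei.trans ej.symm)
    · rw [h] at ei; cases ei
  · rcases h2 with h | h
    · exact h (ej.trans ei.symm)
    · rw [h] at ej; cases ej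
  · rcases h3 with h | h
    · exact h (ej.trans ei.symm)
    · rw [h] at ej; cases ej

/-! ### sum reduction -/

lemma sum_tri_eq (w : I → ℝ) (hxy : x ≠ y) (hxz : x ≠ z) (hyz : y ≠ z)
    {A : I → Prop} [DecidablePred A] (h : ∀ i, A i → i = x ∨ i = y ∨ i = z) :
    (∑ i ∈ Finset.univ.filter fun i => A i, w i)
      = (if A x then w x else 0) + ((if A y then w y else 0) + (if A z then w z else 0)) := by
  have hset : (Finset.univ.filter fun i => A i) = ({x, y, z} : Finset I).filter fun i => A i := by
    ext i
    simp only [Finset.mem_filter, Finset.mem_univ, true_and, Finset.mem_insert,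
      Finset.mem_singleton]
    exact ⟨fun hA => ⟨h i hA, hA⟩, fun hA => hA.2⟩
  rw [hset, Finset.sum_filter]
  rw [show ({x, y, z} : Finset I) = insert x (insert y ({z} : Finset I)) from rfl]
  rw [Finset.sum_insert (by simp [hxy, hxz]), Finset.sum_insert (by simp [hyz]),
    Finset.sum_singleton]

lemma tri_le_sum (w : I → ℝ) (hw : ∀ i, 0 < w i) (hxy : x ≠ y) (hxz : x ≠ z) (hyz : y ≠ z)
    {B : I → Prop} [DecidablePred B] :
    (if B x then w x else 0) + ((if B y then w y else 0) + (if B z then w z else 0))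
      ≤ ∑ i ∈ Finset.univ.filter fun i => B i, w i := by
  have hstep : (if B x then w x else 0) + ((if B y then w y else 0) + (if B z then w z else 0))
      = ∑ i ∈ ({x, y, z} : Finset I).filter fun i => B i, w i := by
    rw [Finset.sum_filter]
    rw [show ({x, y, z} : Finset I) = insert x (insert y ({z} : Finset I)) from rfl]
    rw [Finset.sum_insert (by simp [hxy, hxz]), Finset.sum_insert (by simp [hyz]),
      Finset.sum_singleton]
  rw [hstep]
  apply Finset.sum_le_sum_of_subset_of_nonneg
  · exact Finset.filter_subset_filter _ (Finset.subset_univ _)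
  · intro i _ _; exact (hw i).le

lemma ite_nn (w : I → ℝ) (hw : ∀ i, 0 < w i) (p : Prop) [Decidable p] (i : I) :
    0 ≤ if p then w i else 0 := by
  split
  · exact (hw i).le
  · exact le_refl 0

/-! ### master popularity lemmas -/

lemma not_more_pop (w : I → ℝ) (hw : ∀ i, 0 < w i) (P : I → LinearOrder (Option O))
    (hxy : x ≠ y) (hxz : x ≠ z) (hyz : y ≠ z) (μ μ' : I → Option O)
    (hout : ∀ l, l ≠ x → l ≠ y → l ≠ z → ¬ Prefers (P l) (μ' l) (μ l))
    (key : (if Prefers (P x) (μ' x) (μ x) then w x else 0)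
        + ((if Prefers (P y) (μ' y) (μ y) then w y else 0)
        + (if Prefers (P z) (μ' z) (μ z) then w z else 0))
      ≤ (if Prefers (P x) (μ x) (μ' x) then w x else 0)
        + ((if Prefers (P y) (μ y) (μ' y) then w y else 0)
        + (if Prefers (P z) (μ z) (μ' z) then w z else 0))) :
    ¬ MoreWPopular w P μ' μ := by
  unfold MoreWPopular
  rw [not_lt]
  calc (∑ i ∈ Finset.univ.filter fun i : I => Prefers (P i) (μ' i) (μ i), w i)
      = (if Prefers (P x) (μ' x) (μ x) then w x else 0)
        + ((if Prefers (P y) (μ' y) (μ y) then w y else 0)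
        + (if Prefers (P z) (μ' z) (μ z) then w z else 0)) := by
        apply sum_tri_eq w hxy hxz hyz
        intro i hA
        by_contra hc
        push_neg at hc
        exact hout i hc.1 hc.2.1 hc.2.2 hA
    _ ≤ _ := key
    _ ≤ ∑ j ∈ Finset.univ.filter fun j : I => Prefers (P j) (μ j) (μ' j), w j :=
        tri_le_sum w hw hxy hxz hyz (B := fun j => Prefers (P j) (μ j) (μ' j))

lemma more_pop (w : I → ℝ) (hw : ∀ i, 0 < w i) (P : I → LinearOrder (Option O))
    (hxy : x ≠ y) (hxz : x ≠ z) (hyz : y ≠ z) (ν ν' : I → Option O)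
    (hout : ∀ l, l ≠ x → l ≠ y → l ≠ z → ¬ Prefers (P l) (ν l) (ν' l))
    (key : (if Prefers (P x) (ν x) (ν' x) then w x else 0)
        + ((if Prefers (P y) (ν y) (ν' y) then w y else 0)
        + (if Prefers (P z) (ν z) (ν' z) then w z else 0))
      < (if Prefers (P x) (ν' x) (ν x) then w x else 0)
        + ((if Prefers (P y) (ν' y) (ν y) then w y else 0)
        + (if Prefers (P z) (ν' z) (ν z) then w z else 0))) :
    MoreWPopular w P ν' ν := by
  unfold MoreWPopular
  calc (∑ j ∈ Finset.univ.filter fun j : I => Prefers (P j) (ν j) (ν' j), w j)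
      = (if Prefers (P x) (ν x) (ν' x) then w x else 0)
        + ((if Prefers (P y) (ν y) (ν' y) then w y else 0)
        + (if Prefers (P z) (ν z) (ν' z) then w z else 0)) := by
        apply sum_tri_eq w hxy hxz hyz
        intro i hA
        by_contra hc
        push_neg at hc
        exact hout i hc.1 hc.2.1 hc.2.2 hA
    _ < _ := key
    _ ≤ ∑ i ∈ Finset.univ.filter fun i : I => Prefers (P i) (ν' i) (ν i), w i :=
        tri_le_sum w hw hxy hxz hyz (B := fun i => Prefers (P i) (ν' i) (ν i))

end Aux2
section Aux3

open Finset

variable {I O : Type} [Fintype I] [Fintype O]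
variable {w : I → ℝ} {x y z : I} {a b : O}

lemma ite_le (w : I → ℝ) (hw : ∀ i, 0 < w i) (p : Prop) [Decidable p] (i : I) :
    (if p then w i else 0) ≤ w i := by
  split
  · exact le_refl _
  · exact (hw i).le

/-! ### Case I profiles -/

lemma exA (hxy : x ≠ y) (hxz : x ≠ z) (hyz : y ≠ z) (hab : a ≠ b)
    (hw : ∀ i, 0 < w i) (hwyx : w y ≤ w x) :
    WPopular w (triFun x y z (ordA a) (ordA a) (ordA b) ord0) (fun _ => 1)
      (triFun x y z (some a) none (some b) none) := by
  constructor
  · exact isMatching_tri hxy hxz hyz (Or.inl (by simp)) (Or.inl (by simp [hab])) (Or.inr rfl)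
  · intro μ' hm'
    apply not_more_pop w hw _ hxy hxz hyz
    · intro l h1 h2 h3
      simp only [triFun_other h1 h2 h3]
      exact p0_not
    · simp only [triFun_x, triFun_y hxy, triFun_z hxz hyz]
      have e1 : ¬ Prefers (ordA a) (μ' x) (some a) := pA_top _
      have e3 : ¬ Prefers (ordA b) (μ' z) (some b) := pA_top _
      rw [if_neg e1, if_neg e3]
      by_cases e2 : Prefers (ordA a) (μ' y) (none : Option O)
      · have hya : μ' y = some a := pA_none.1 e2
        have f1 : Prefers (ordA a) (some a) (μ' x) :=
          pA_best.2 fun hc => hxy (matching_unique hm' rfl hc hya)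
        rw [if_pos e2, if_pos f1]
        have n2 := ite_nn w hw (Prefers (ordA a) (none : Option O) (μ' y)) y
        have n3 := ite_nn w hw (Prefers (ordA b) (some b) (μ' z)) z
        linarith
      · rw [if_neg e2]
        have n1 := ite_nn w hw (Prefers (ordA a) (some a) (μ' x)) x
        have n2 := ite_nn w hw (Prefers (ordA a) (none : Option O) (μ' y)) y
        have n3 := ite_nn w hw (Prefers (ordA b) (some b) (μ' z)) z
        linarith

lemma clA (hxy : x ≠ y) (hxz : x ≠ z) (hyz : y ≠ z) (hab : a ≠ b)
    (hw : ∀ i, 0 < w i) {ν : I → Option O}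
    (hpop : WPopular w (triFun x y z (ordA a) (ordA a) (ordA b) ord0) (fun _ => 1) ν) :
    ν x = some a ∨ ν y = some a := by
  by_contra hcon
  push_neg at hcon
  obtain ⟨hx, hy⟩ := hcon
  by_cases hz : ν z = some b
  · refine hpop.2 (triFun x y z (some a) none (some b) none)
      (isMatching_tri hxy hxz hyz (Or.inl (by simp)) (Or.inl (by simp [hab])) (Or.inr rfl))
      (more_pop w hw _ hxy hxz hyz _ _ ?_ ?_)
    · intro l h1 h2 h3
      simp only [triFun_other h1 h2 h3]
      exact p0_not
    · simp only [triFun_x, triFun_y hxy, triFun_z hxz hyz]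
      have e1 : ¬ Prefers (ordA a) (ν x) (some a) := pA_top _
      have e2 : ¬ Prefers (ordA a) (ν y) (none : Option O) := fun h => hy (pA_none.1 h)
      have e3 : ¬ Prefers (ordA b) (ν z) (some b) := pA_top _
      have f1 : Prefers (ordA a) (some a) (ν x) := pA_best.2 hx
      rw [if_neg e1, if_neg e2, if_neg e3, if_pos f1]
      have n2 := ite_nn w hw (Prefers (ordA a) (none : Option O) (ν y)) y
      have n3 := ite_nn w hw (Prefers (ordA b) (some b) (ν z)) z
      have := hw x
      linarith
  · refine hpop.2 (triFun x y z (some a) none none none)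
      (isMatching_tri hxy hxz hyz (Or.inl (by simp)) (Or.inl (by simp)) (Or.inr rfl))
      (more_pop w hw _ hxy hxz hyz _ _ ?_ ?_)
    · intro l h1 h2 h3
      simp only [triFun_other h1 h2 h3]
      exact p0_not
    · simp only [triFun_x, triFun_y hxy, triFun_z hxz hyz]
      have e1 : ¬ Prefers (ordA a) (ν x) (some a) := pA_top _
      have e2 : ¬ Prefers (ordA a) (ν y) (none : Option O) := fun h => hy (pA_none.1 h)
      have e3 : ¬ Prefers (ordA b) (ν z) (none : Option O) := fun h => hz (pA_none.1 h)
      have f1 : Prefers (ordA a) (some a) (ν x) := pA_best.2 hx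
      rw [if_neg e1, if_neg e2, if_neg e3, if_pos f1]
      have n2 := ite_nn w hw (Prefers (ordA a) (none : Option O) (ν y)) y
      have n3 := ite_nn w hw (Prefers (ordA b) (none : Option O) (ν z)) z
      have := hw x
      linarith

lemma exB (hxy : x ≠ y) (hxz : x ≠ z) (hyz : y ≠ z) (hab : a ≠ b)
    (hw : ∀ i, 0 < w i) (hwxy : w x ≤ w y) :
    WPopular w (triFun x y z (ordA a) (ordAB a b) (ordA b) ord0) (fun _ => 1)
      (triFun x y z none (some a) (some b) none) := by
  constructor
  · exact isMatching_tri hxy hxz hyz (Or.inr rfl) (Or.inr rfl) (Or.inl (by simp [hab]))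
  · intro μ' hm'
    apply not_more_pop w hw _ hxy hxz hyz
    · intro l h1 h2 h3
      simp only [triFun_other h1 h2 h3]
      exact p0_not
    · simp only [triFun_x, triFun_y hxy, triFun_z hxz hyz]
      have e2 : ¬ Prefers (ordAB a b) (μ' y) (some a) := pAB_top _
      have e3 : ¬ Prefers (ordA b) (μ' z) (some b) := pA_top _
      rw [if_neg e2, if_neg e3]
      by_cases e1 : Prefers (ordA a) (μ' x) (none : Option O)
      · have hxa : μ' x = some a := pA_none.1 e1
        have f2 : Prefers (ordAB a b) (some a) (μ' y) :=
          pAB_a.2 fun hc => hxy (matching_unique hm' rfl hxa hc)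
        rw [if_pos e1, if_pos f2]
        have n1 := ite_nn w hw (Prefers (ordA a) (none : Option O) (μ' x)) x
        have n3 := ite_nn w hw (Prefers (ordA b) (some b) (μ' z)) z
        linarith
      · rw [if_neg e1]
        have n1 := ite_nn w hw (Prefers (ordA a) (none : Option O) (μ' x)) x
        have n2 := ite_nn w hw (Prefers (ordAB a b) (some a) (μ' y)) y
        have n3 := ite_nn w hw (Prefers (ordA b) (some b) (μ' z)) z
        linarith

lemma clB (hxy : x ≠ y) (hxz : x ≠ z) (hyz : y ≠ z) (hab : a ≠ b)
    (hw : ∀ i, 0 < w i) (hzy : w z < w y) (hxyz : w x < w y + w z) {ν : I → Option O}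
    (hpop : WPopular w (triFun x y z (ordA a) (ordAB a b) (ordA b) ord0) (fun _ => 1) ν) :
    ν y = some a := by
  by_contra hy
  by_cases hx : ν x = some a
  · by_cases hyb : ν y = some b
    · have hzb : ν z ≠ some b := fun hc => hyz (matching_unique hpop.1 rfl hyb hc)
      refine hpop.2 (triFun x y z none (some a) (some b) none)
        (isMatching_tri hxy hxz hyz (Or.inr rfl) (Or.inr rfl) (Or.inl (by simp [hab])))
        (more_pop w hw _ hxy hxz hyz _ _ ?_ ?_)
      · intro l h1 h2 h3
        simp only [triFun_other h1 h2 h3]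
        exact p0_not
      · simp only [triFun_x, triFun_y hxy, triFun_z hxz hyz]
        have e1 : Prefers (ordA a) (ν x) (none : Option O) := pA_none.2 hx
        have e2 : ¬ Prefers (ordAB a b) (ν y) (some a) := pAB_top _
        have e3 : ¬ Prefers (ordA b) (ν z) (some b) := pA_top _
        have f2 : Prefers (ordAB a b) (some a) (ν y) := pAB_a.2 hy
        have f3 : Prefers (ordA b) (some b) (ν z) := pA_best.2 hzb
        rw [if_pos e1, if_neg e2, if_neg e3, if_pos f2, if_pos f3]
        have n1 := ite_nn w hw (Prefers (ordA a) (none : Option O) (ν x)) x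
        linarith
    · by_cases hzb : ν z = some b
      · refine hpop.2 (triFun x y z (some a) (some b) none none)
          (isMatching_tri hxy hxz hyz (Or.inl (by simp [hab])) (Or.inl (by simp))
            (Or.inl (by simp)))
          (more_pop w hw _ hxy hxz hyz _ _ ?_ ?_)
        · intro l h1 h2 h3
          simp only [triFun_other h1 h2 h3]
          exact p0_not
        · simp only [triFun_x, triFun_y hxy, triFun_z hxz hyz]
          have e1 : ¬ Prefers (ordA a) (ν x) (some a) := pA_top _
          have e2 : ¬ Prefers (ordAB a b) (ν y) (some b) := fun h => hy ((pAB_vb hab).1 h)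
          have e3 : Prefers (ordA b) (ν z) (none : Option O) := pA_none.2 hzb
          have f2 : Prefers (ordAB a b) (some b) (ν y) := (pAB_b hab).2 ⟨hy, hyb⟩
          rw [if_neg e1, if_neg e2, if_pos e3, if_pos f2]
          have n1 := ite_nn w hw (Prefers (ordA a) (some a) (ν x)) x
          have n3 := ite_nn w hw (Prefers (ordA b) (none : Option O) (ν z)) z
          linarith
      · refine hpop.2 (triFun x y z (some a) (some b) none none)
          (isMatching_tri hxy hxz hyz (Or.inl (by simp [hab])) (Or.inl (by simp))
            (Or.inl (by simp)))
          (more_pop w hw _ hxy hxz hyz _ _ ?_ ?_)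
        · intro l h1 h2 h3
          simp only [triFun_other h1 h2 h3]
          exact p0_not
        · simp only [triFun_x, triFun_y hxy, triFun_z hxz hyz]
          have e1 : ¬ Prefers (ordA a) (ν x) (some a) := pA_top _
          have e2 : ¬ Prefers (ordAB a b) (ν y) (some b) := fun h => hy ((pAB_vb hab).1 h)
          have e3 : ¬ Prefers (ordA b) (ν z) (none : Option O) := fun h => hzb (pA_none.1 h)
          have f2 : Prefers (ordAB a b) (some b) (ν y) := (pAB_b hab).2 ⟨hy, hyb⟩
          rw [if_neg e1, if_neg e2, if_neg e3, if_pos f2]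
          have n1 := ite_nn w hw (Prefers (ordA a) (some a) (ν x)) x
          have n3 := ite_nn w hw (Prefers (ordA b) (none : Option O) (ν z)) z
          have := hw y
          linarith
  · by_cases hzb : ν z = some b
    · refine hpop.2 (triFun x y z none (some a) (some b) none)
        (isMatching_tri hxy hxz hyz (Or.inr rfl) (Or.inr rfl) (Or.inl (by simp [hab])))
        (more_pop w hw _ hxy hxz hyz _ _ ?_ ?_)
      · intro l h1 h2 h3
        simp only [triFun_other h1 h2 h3]
        exact p0_not
      · simp only [triFun_x, triFun_y hxy, triFun_z hxz hyz]
        have e1 : ¬ Prefers (ordA a) (ν x) (none : Option O) := fun h => hx (pA_none.1 h)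
        have e2 : ¬ Prefers (ordAB a b) (ν y) (some a) := pAB_top _
        have e3 : ¬ Prefers (ordA b) (ν z) (some b) := pA_top _
        have f2 : Prefers (ordAB a b) (some a) (ν y) := pAB_a.2 hy
        rw [if_neg e1, if_neg e2, if_neg e3, if_pos f2]
        have n1 := ite_nn w hw (Prefers (ordA a) (none : Option O) (ν x)) x
        have n3 := ite_nn w hw (Prefers (ordA b) (some b) (ν z)) z
        have := hw y
        linarith
    · refine hpop.2 (triFun x y z none (some a) none none)
        (isMatching_tri hxy hxz hyz (Or.inr rfl) (Or.inr rfl) (Or.inl (by simp)))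
        (more_pop w hw _ hxy hxz hyz _ _ ?_ ?_)
      · intro l h1 h2 h3
        simp only [triFun_other h1 h2 h3]
        exact p0_not
      · simp only [triFun_x, triFun_y hxy, triFun_z hxz hyz]
        have e1 : ¬ Prefers (ordA a) (ν x) (none : Option O) := fun h => hx (pA_none.1 h)
        have e2 : ¬ Prefers (ordAB a b) (ν y) (some a) := pAB_top _
        have e3 : ¬ Prefers (ordA b) (ν z) (none : Option O) := fun h => hzb (pA_none.1 h)
        have f2 : Prefers (ordAB a b) (some a) (ν y) := pAB_a.2 hy
        rw [if_neg e1, if_neg e2, if_neg e3, if_pos f2]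
        have n1 := ite_nn w hw (Prefers (ordA a) (none : Option O) (ν x)) x
        have n3 := ite_nn w hw (Prefers (ordA b) (none : Option O) (ν z)) z
        have := hw y
        linarith

/-! ### Case II profiles -/

lemma exG1 (hxy : x ≠ y) (hxz : x ≠ z) (hyz : y ≠ z) (hab : a ≠ b)
    (hw : ∀ i, 0 < w i) (hwxy : w x ≤ w y) (hwzy : w z ≤ w y) :
    WPopular w (triFun x y z (ordA a) (ordAB a b) (ordAB a b) ord0) (fun _ => 1)
      (triFun x y z none (some a) (some b) none) := by
  constructor
  · exact isMatching_tri hxy hxz hyz (Or.inr rfl) (Or.inr rfl) (Or.inl (by simp [hab]))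
  · intro μ' hm'
    apply not_more_pop w hw _ hxy hxz hyz
    · intro l h1 h2 h3
      simp only [triFun_other h1 h2 h3]
      exact p0_not
    · simp only [triFun_x, triFun_y hxy, triFun_z hxz hyz]
      have e2 : ¬ Prefers (ordAB a b) (μ' y) (some a) := pAB_top _
      rw [if_neg e2]
      by_cases e1 : Prefers (ordA a) (μ' x) (none : Option O)
      · have hxa : μ' x = some a := pA_none.1 e1
        have f2 : Prefers (ordAB a b) (some a) (μ' y) :=
          pAB_a.2 fun hc => hxy (matching_unique hm' rfl hxa hc)
        have e3 : ¬ Prefers (ordAB a b) (μ' z) (some b) := fun h =>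
          hxz (matching_unique hm' rfl hxa ((pAB_vb hab).1 h))
        rw [if_pos e1, if_neg e3, if_pos f2]
        have n1 := ite_nn w hw (Prefers (ordA a) (none : Option O) (μ' x)) x
        have n3 := ite_nn w hw (Prefers (ordAB a b) (some b) (μ' z)) z
        linarith
      · rw [if_neg e1]
        by_cases e3 : Prefers (ordAB a b) (μ' z) (some b)
        · have hza : μ' z = some a := (pAB_vb hab).1 e3
          have f2 : Prefers (ordAB a b) (some a) (μ' y) :=
            pAB_a.2 fun hc => hyz (matching_unique hm' rfl hc hza)
          rw [if_pos e3, if_pos f2]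
          have n1 := ite_nn w hw (Prefers (ordA a) (none : Option O) (μ' x)) x
          have n3 := ite_nn w hw (Prefers (ordAB a b) (some b) (μ' z)) z
          linarith
        · rw [if_neg e3]
          have n1 := ite_nn w hw (Prefers (ordA a) (none : Option O) (μ' x)) x
          have n2 := ite_nn w hw (Prefers (ordAB a b) (some a) (μ' y)) y
          have n3 := ite_nn w hw (Prefers (ordAB a b) (some b) (μ' z)) z
          linarith

lemma clG1 (hxy : x ≠ y) (hxz : x ≠ z) (hyz : y ≠ z) (hab : a ≠ b)
    (hw : ∀ i, 0 < w i) (hxyz : w x < w y + w z) {ν : I → Option O}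
    (hpop : WPopular w (triFun x y z (ordA a) (ordAB a b) (ordAB a b) ord0) (fun _ => 1) ν) :
    ν x ≠ some a := by
  intro hx
  have hy : ν y ≠ some a := fun hc => hxy (matching_unique hpop.1 rfl hx hc)
  have hz : ν z ≠ some a := fun hc => hxz (matching_unique hpop.1 rfl hx hc)
  by_cases hzb : ν z = some b
  · have hyb : ν y ≠ some b := fun hc => hyz (matching_unique hpop.1 rfl hc hzb)
    refine hpop.2 (triFun x y z none (some b) (some a) none)
      (isMatching_tri hxy hxz hyz (Or.inr rfl) (Or.inr rfl) (Or.inl (by simp [Ne.symm hab])))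
      (more_pop w hw _ hxy hxz hyz _ _ ?_ ?_)
    · intro l h1 h2 h3
      simp only [triFun_other h1 h2 h3]
      exact p0_not
    · simp only [triFun_x, triFun_y hxy, triFun_z hxz hyz]
      have e1 : Prefers (ordA a) (ν x) (none : Option O) := pA_none.2 hx
      have e2 : ¬ Prefers (ordAB a b) (ν y) (some b) := fun h => hy ((pAB_vb hab).1 h)
      have e3 : ¬ Prefers (ordAB a b) (ν z) (some a) := pAB_top _
      have f2 : Prefers (ordAB a b) (some b) (ν y) := (pAB_b hab).2 ⟨hy, hyb⟩
      have f3 : Prefers (ordAB a b) (some a) (ν z) := pAB_a.2 hz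
      rw [if_pos e1, if_neg e2, if_neg e3, if_pos f2, if_pos f3]
      have n1 := ite_nn w hw (Prefers (ordA a) (none : Option O) (ν x)) x
      linarith
  · refine hpop.2 (triFun x y z none (some a) (some b) none)
      (isMatching_tri hxy hxz hyz (Or.inr rfl) (Or.inr rfl) (Or.inl (by simp [hab])))
      (more_pop w hw _ hxy hxz hyz _ _ ?_ ?_)
    · intro l h1 h2 h3
      simp only [triFun_other h1 h2 h3]
      exact p0_not
    · simp only [triFun_x, triFun_y hxy, triFun_z hxz hyz]
      have e1 : Prefers (ordA a) (ν x) (none : Option O) := pA_none.2 hx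
      have e2 : ¬ Prefers (ordAB a b) (ν y) (some a) := pAB_top _
      have e3 : ¬ Prefers (ordAB a b) (ν z) (some b) := fun h => hz ((pAB_vb hab).1 h)
      have f2 : Prefers (ordAB a b) (some a) (ν y) := pAB_a.2 hy
      have f3 : Prefers (ordAB a b) (some b) (ν z) := (pAB_b hab).2 ⟨hz, hzb⟩
      rw [if_pos e1, if_neg e2, if_neg e3, if_pos f2, if_pos f3]
      have n1 := ite_nn w hw (Prefers (ordA a) (none : Option O) (ν x)) x
      linarith

lemma exG2 (hxy : x ≠ y) (hxz : x ≠ z) (hyz : y ≠ z) (hab : a ≠ b)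
    (hw : ∀ i, 0 < w i) (hwzx : w z ≤ w x) (hwzy : w z ≤ w y) :
    WPopular w (triFun x y z (ordA b) (ordAB a b) (ordAB a b) ord0) (fun _ => 1)
      (triFun x y z (some b) (some a) none none) := by
  constructor
  · exact isMatching_tri hxy hxz hyz (Or.inl (by simp [Ne.symm hab])) (Or.inl (by simp))
      (Or.inl (by simp))
  · intro μ' hm'
    apply not_more_pop w hw _ hxy hxz hyz
    · intro l h1 h2 h3
      simp only [triFun_other h1 h2 h3]
      exact p0_not
    · simp only [triFun_x, triFun_y hxy, triFun_z hxz hyz]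
      have e1 : ¬ Prefers (ordA b) (μ' x) (some b) := pA_top _
      have e2 : ¬ Prefers (ordAB a b) (μ' y) (some a) := pAB_top _
      rw [if_neg e1, if_neg e2]
      by_cases e3 : Prefers (ordAB a b) (μ' z) (none : Option O)
      · rcases (pAB_none hab).1 e3 with hza | hzb
        · have f2 : Prefers (ordAB a b) (some a) (μ' y) :=
            pAB_a.2 fun hc => hyz (matching_unique hm' rfl hc hza)
          rw [if_pos e3, if_pos f2]
          have n1 := ite_nn w hw (Prefers (ordA b) (some b) (μ' x)) x
          have n3 := ite_nn w hw (Prefers (ordAB a b) (none : Option O) (μ' z)) z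
          linarith
        · have f1 : Prefers (ordA b) (some b) (μ' x) :=
            pA_best.2 fun hc => hxz (matching_unique hm' rfl hc hzb)
          rw [if_pos e3, if_pos f1]
          have n2 := ite_nn w hw (Prefers (ordAB a b) (some a) (μ' y)) y
          have n3 := ite_nn w hw (Prefers (ordAB a b) (none : Option O) (μ' z)) z
          linarith
      · rw [if_neg e3]
        have n1 := ite_nn w hw (Prefers (ordA b) (some b) (μ' x)) x
        have n2 := ite_nn w hw (Prefers (ordAB a b) (some a) (μ' y)) y
        have n3 := ite_nn w hw (Prefers (ordAB a b) (none : Option O) (μ' z)) z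
        linarith

lemma clG2 (hxy : x ≠ y) (hxz : x ≠ z) (hyz : y ≠ z) (hab : a ≠ b)
    (hw : ∀ i, 0 < w i) (hzxy : w z < w x + w y) (hyxz : w y < w x + w z) {ν : I → Option O}
    (hpop : WPopular w (triFun x y z (ordA b) (ordAB a b) (ordAB a b) ord0) (fun _ => 1) ν) :
    ν x = some b := by
  by_contra hx
  by_cases hyb : ν y = some b
  · refine hpop.2 (triFun x y z (some b) (some a) none none)
      (isMatching_tri hxy hxz hyz (Or.inl (by simp [Ne.symm hab])) (Or.inl (by simp))
        (Or.inl (by simp)))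
      (more_pop w hw _ hxy hxz hyz _ _ ?_ ?_)
    · intro l h1 h2 h3
      simp only [triFun_other h1 h2 h3]
      exact p0_not
    · simp only [triFun_x, triFun_y hxy, triFun_z hxz hyz]
      have e1 : ¬ Prefers (ordA b) (ν x) (some b) := pA_top _
      have e2 : ¬ Prefers (ordAB a b) (ν y) (some a) := pAB_top _
      have f1 : Prefers (ordA b) (some b) (ν x) := pA_best.2 hx
      have f2 : Prefers (ordAB a b) (some a) (ν y) :=
        pAB_a.2 (by rw [hyb]; simp [Ne.symm hab])
      rw [if_neg e1, if_neg e2, if_pos f1, if_pos f2]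
      have n3 := ite_le w hw (Prefers (ordAB a b) (ν z) (none : Option O)) z
      have n3' := ite_nn w hw (Prefers (ordAB a b) (none : Option O) (ν z)) z
      linarith
  · by_cases hzb : ν z = some b
    · refine hpop.2 (triFun x y z (some b) none (some a) none)
        (isMatching_tri hxy hxz hyz (Or.inl (by simp)) (Or.inl (by simp [Ne.symm hab]))
          (Or.inr rfl))
        (more_pop w hw _ hxy hxz hyz _ _ ?_ ?_)
      · intro l h1 h2 h3
        simp only [triFun_other h1 h2 h3]
        exact p0_not
      · simp only [triFun_x, triFun_y hxy, triFun_z hxz hyz]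
        have e1 : ¬ Prefers (ordA b) (ν x) (some b) := pA_top _
        have e3 : ¬ Prefers (ordAB a b) (ν z) (some a) := pAB_top _
        have f1 : Prefers (ordA b) (some b) (ν x) := pA_best.2 hx
        have f3 : Prefers (ordAB a b) (some a) (ν z) :=
          pAB_a.2 (by rw [hzb]; simp [Ne.symm hab])
        rw [if_neg e1, if_neg e3, if_pos f1, if_pos f3]
        have n2 := ite_le w hw (Prefers (ordAB a b) (ν y) (none : Option O)) y
        have n2' := ite_nn w hw (Prefers (ordAB a b) (none : Option O) (ν y)) y
        linarith
    · by_cases hya : ν y = some a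
      · have hza : ν z ≠ some a := fun hc => hyz (matching_unique hpop.1 rfl hya hc)
        refine hpop.2 (triFun x y z (some b) (some a) none none)
          (isMatching_tri hxy hxz hyz (Or.inl (by simp [Ne.symm hab])) (Or.inl (by simp))
            (Or.inl (by simp)))
          (more_pop w hw _ hxy hxz hyz _ _ ?_ ?_)
        · intro l h1 h2 h3
          simp only [triFun_other h1 h2 h3]
          exact p0_not
        · simp only [triFun_x, triFun_y hxy, triFun_z hxz hyz]
          have e1 : ¬ Prefers (ordA b) (ν x) (some b) := pA_top _
          have e2 : ¬ Prefers (ordAB a b) (ν y) (some a) := pAB_top _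
          have e3 : ¬ Prefers (ordAB a b) (ν z) (none : Option O) := fun h => by
            rcases (pAB_none hab).1 h with h' | h'
            · exact hza h'
            · exact hzb h'
          have f1 : Prefers (ordA b) (some b) (ν x) := pA_best.2 hx
          rw [if_neg e1, if_neg e2, if_neg e3, if_pos f1]
          have n2 := ite_nn w hw (Prefers (ordAB a b) (some a) (ν y)) y
          have n3 := ite_nn w hw (Prefers (ordAB a b) (none : Option O) (ν z)) z
          have := hw x
          linarith
      · by_cases hza : ν z = some a
        · refine hpop.2 (triFun x y z (some b) none (some a) none)
            (isMatching_tri hxy hxz hyz (Or.inl (by simp)) (Or.inl (by simp [Ne.symm hab]))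
              (Or.inr rfl))
            (more_pop w hw _ hxy hxz hyz _ _ ?_ ?_)
          · intro l h1 h2 h3
            simp only [triFun_other h1 h2 h3]
            exact p0_not
          · simp only [triFun_x, triFun_y hxy, triFun_z hxz hyz]
            have e1 : ¬ Prefers (ordA b) (ν x) (some b) := pA_top _
            have e2 : ¬ Prefers (ordAB a b) (ν y) (none : Option O) := fun h => by
              rcases (pAB_none hab).1 h with h' | h'
              · exact hya h'
              · exact hyb h'
            have e3 : ¬ Prefers (ordAB a b) (ν z) (some a) := pAB_top _
            have f1 : Prefers (ordA b) (some b) (ν x) := pA_best.2 hx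
            rw [if_neg e1, if_neg e2, if_neg e3, if_pos f1]
            have n2 := ite_nn w hw (Prefers (ordAB a b) (none : Option O) (ν y)) y
            have n3 := ite_nn w hw (Prefers (ordAB a b) (some a) (ν z)) z
            have := hw x
            linarith
        · refine hpop.2 (triFun x y z (some b) none none none)
            (isMatching_tri hxy hxz hyz (Or.inl (by simp)) (Or.inl (by simp))
              (Or.inr rfl))
            (more_pop w hw _ hxy hxz hyz _ _ ?_ ?_)
          · intro l h1 h2 h3
            simp only [triFun_other h1 h2 h3]
            exact p0_not
          · simp only [triFun_x, triFun_y hxy, triFun_z hxz hyz]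
            have e1 : ¬ Prefers (ordA b) (ν x) (some b) := pA_top _
            have e2 : ¬ Prefers (ordAB a b) (ν y) (none : Option O) := fun h => by
              rcases (pAB_none hab).1 h with h' | h'
              · exact hya h'
              · exact hyb h'
            have e3 : ¬ Prefers (ordAB a b) (ν z) (none : Option O) := fun h => by
              rcases (pAB_none hab).1 h with h' | h'
              · exact hza h'
              · exact hzb h'
            have f1 : Prefers (ordA b) (some b) (ν x) := pA_best.2 hx
            rw [if_neg e1, if_neg e2, if_neg e3, if_pos f1]
            have n2 := ite_nn w hw (Prefers (ordAB a b) (none : Option O) (ν y)) y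
            have n3 := ite_nn w hw (Prefers (ordAB a b) (none : Option O) (ν z)) z
            have := hw x
            linarith

/-! ### Case III profiles -/

lemma exF1 (hxy : x ≠ y) (hxz : x ≠ z) (hyz : y ≠ z) (hab : a ≠ b)
    (hw : ∀ i, 0 < w i) (hwzy : w z ≤ w y) :
    WPopular w (triFun x y z (ordA a) (ordA b) (ordA b) ord0) (fun _ => 1)
      (triFun x y z (some a) (some b) none none) := by
  constructor
  · exact isMatching_tri hxy hxz hyz (Or.inl (by simp [hab])) (Or.inl (by simp))
      (Or.inl (by simp))
  · intro μ' hm'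
    apply not_more_pop w hw _ hxy hxz hyz
    · intro l h1 h2 h3
      simp only [triFun_other h1 h2 h3]
      exact p0_not
    · simp only [triFun_x, triFun_y hxy, triFun_z hxz hyz]
      have e1 : ¬ Prefers (ordA a) (μ' x) (some a) := pA_top _
      have e2 : ¬ Prefers (ordA b) (μ' y) (some b) := pA_top _
      rw [if_neg e1, if_neg e2]
      by_cases e3 : Prefers (ordA b) (μ' z) (none : Option O)
      · have hzb : μ' z = some b := pA_none.1 e3
        have f2 : Prefers (ordA b) (some b) (μ' y) :=
          pA_best.2 fun hc => hyz (matching_unique hm' rfl hc hzb)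
        rw [if_pos e3, if_pos f2]
        have n1 := ite_nn w hw (Prefers (ordA a) (some a) (μ' x)) x
        have n3 := ite_nn w hw (Prefers (ordA b) (none : Option O) (μ' z)) z
        linarith
      · rw [if_neg e3]
        have n1 := ite_nn w hw (Prefers (ordA a) (some a) (μ' x)) x
        have n2 := ite_nn w hw (Prefers (ordA b) (some b) (μ' y)) y
        have n3 := ite_nn w hw (Prefers (ordA b) (none : Option O) (μ' z)) z
        linarith

lemma clF1 (hxy : x ≠ y) (hxz : x ≠ z) (hyz : y ≠ z) (hab : a ≠ b)
    (hw : ∀ i, 0 < w i) {ν : I → Option O}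
    (hpop : WPopular w (triFun x y z (ordA a) (ordA b) (ordA b) ord0) (fun _ => 1) ν) :
    ν y = some b ∨ ν z = some b := by
  by_contra hcon
  push_neg at hcon
  obtain ⟨hy, hz⟩ := hcon
  by_cases hxa : ν x = some a
  · refine hpop.2 (triFun x y z (some a) (some b) none none)
      (isMatching_tri hxy hxz hyz (Or.inl (by simp [hab])) (Or.inl (by simp))
        (Or.inl (by simp)))
      (more_pop w hw _ hxy hxz hyz _ _ ?_ ?_)
    · intro l h1 h2 h3
      simp only [triFun_other h1 h2 h3]
      exact p0_not
    · simp only [triFun_x, triFun_y hxy, triFun_z hxz hyz]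
      have e1 : ¬ Prefers (ordA a) (ν x) (some a) := pA_top _
      have e2 : ¬ Prefers (ordA b) (ν y) (some b) := pA_top _
      have e3 : ¬ Prefers (ordA b) (ν z) (none : Option O) := fun h => hz (pA_none.1 h)
      have f2 : Prefers (ordA b) (some b) (ν y) := pA_best.2 hy
      rw [if_neg e1, if_neg e2, if_neg e3, if_pos f2]
      have n1 := ite_nn w hw (Prefers (ordA a) (some a) (ν x)) x
      have n3 := ite_nn w hw (Prefers (ordA b) (none : Option O) (ν z)) z
      have := hw y
      linarith
  · refine hpop.2 (triFun x y z none (some b) none none)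
      (isMatching_tri hxy hxz hyz (Or.inr rfl) (Or.inr rfl) (Or.inl (by simp)))
      (more_pop w hw _ hxy hxz hyz _ _ ?_ ?_)
    · intro l h1 h2 h3
      simp only [triFun_other h1 h2 h3]
      exact p0_not
    · simp only [triFun_x, triFun_y hxy, triFun_z hxz hyz]
      have e1 : ¬ Prefers (ordA a) (ν x) (none : Option O) := fun h => hxa (pA_none.1 h)
      have e2 : ¬ Prefers (ordA b) (ν y) (some b) := pA_top _
      have e3 : ¬ Prefers (ordA b) (ν z) (none : Option O) := fun h => hz (pA_none.1 h)
      have f2 : Prefers (ordA b) (some b) (ν y) := pA_best.2 hy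
      rw [if_neg e1, if_neg e2, if_neg e3, if_pos f2]
      have n1 := ite_nn w hw (Prefers (ordA a) (none : Option O) (ν x)) x
      have n3 := ite_nn w hw (Prefers (ordA b) (none : Option O) (ν z)) z
      have := hw y
      linarith

lemma exF2 (hxy : x ≠ y) (hxz : x ≠ z) (hyz : y ≠ z) (hab : a ≠ b)
    (hw : ∀ i, 0 < w i) (hwzx : w z ≤ w x) (hwzy : w z ≤ w y) :
    WPopular w (triFun x y z (ordA a) (ordA b) (ordAB a b) ord0) (fun _ => 1)
      (triFun x y z (some a) (some b) none none) := by
  constructor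
  · exact isMatching_tri hxy hxz hyz (Or.inl (by simp [hab])) (Or.inl (by simp))
      (Or.inl (by simp))
  · intro μ' hm'
    apply not_more_pop w hw _ hxy hxz hyz
    · intro l h1 h2 h3
      simp only [triFun_other h1 h2 h3]
      exact p0_not
    · simp only [triFun_x, triFun_y hxy, triFun_z hxz hyz]
      have e1 : ¬ Prefers (ordA a) (μ' x) (some a) := pA_top _
      have e2 : ¬ Prefers (ordA b) (μ' y) (some b) := pA_top _
      rw [if_neg e1, if_neg e2]
      by_cases e3 : Prefers (ordAB a b) (μ' z) (none : Option O)
      · rcases (pAB_none hab).1 e3 with hza | hzb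
        · have f1 : Prefers (ordA a) (some a) (μ' x) :=
            pA_best.2 fun hc => hxz (matching_unique hm' rfl hc hza)
          rw [if_pos e3, if_pos f1]
          have n2 := ite_nn w hw (Prefers (ordA b) (some b) (μ' y)) y
          have n3 := ite_nn w hw (Prefers (ordAB a b) (none : Option O) (μ' z)) z
          linarith
        · have f2 : Prefers (ordA b) (some b) (μ' y) :=
            pA_best.2 fun hc => hyz (matching_unique hm' rfl hc hzb)
          rw [if_pos e3, if_pos f2]
          have n1 := ite_nn w hw (Prefers (ordA a) (some a) (μ' x)) x
          have n3 := ite_nn w hw (Prefers (ordAB a b) (none : Option O) (μ' z)) z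
          linarith
      · rw [if_neg e3]
        have n1 := ite_nn w hw (Prefers (ordA a) (some a) (μ' x)) x
        have n2 := ite_nn w hw (Prefers (ordA b) (some b) (μ' y)) y
        have n3 := ite_nn w hw (Prefers (ordAB a b) (none : Option O) (μ' z)) z
        linarith

lemma clF2 (hxy : x ≠ y) (hxz : x ≠ z) (hyz : y ≠ z) (hab : a ≠ b)
    (hw : ∀ i, 0 < w i) (hzx : w z < w x) (hxyz : w x < w y + w z) {ν : I → Option O}
    (hpop : WPopular w (triFun x y z (ordA a) (ordA b) (ordAB a b) ord0) (fun _ => 1) ν) :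
    ν z ≠ some a ∧ ν z ≠ some b := by
  constructor
  · intro hza
    have hxa : ν x ≠ some a := fun hc => hxz (matching_unique hpop.1 rfl hc hza)
    by_cases hyb : ν y = some b
    · refine hpop.2 (triFun x y z (some a) (some b) none none)
        (isMatching_tri hxy hxz hyz (Or.inl (by simp [hab])) (Or.inl (by simp))
          (Or.inl (by simp)))
        (more_pop w hw _ hxy hxz hyz _ _ ?_ ?_)
      · intro l h1 h2 h3
        simp only [triFun_other h1 h2 h3]
        exact p0_not
      · simp only [triFun_x, triFun_y hxy, triFun_z hxz hyz]
        have e1 : ¬ Prefers (ordA a) (ν x) (some a) := pA_top _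
        have e2 : ¬ Prefers (ordA b) (ν y) (some b) := pA_top _
        have e3 : Prefers (ordAB a b) (ν z) (none : Option O) :=
          (pAB_none hab).2 (Or.inl hza)
        have f1 : Prefers (ordA a) (some a) (ν x) := pA_best.2 hxa
        rw [if_neg e1, if_neg e2, if_pos e3, if_pos f1]
        have n2 := ite_nn w hw (Prefers (ordA b) (some b) (ν y)) y
        have n3 := ite_nn w hw (Prefers (ordAB a b) (none : Option O) (ν z)) z
        linarith
    · refine hpop.2 (triFun x y z (some a) none none none)
        (isMatching_tri hxy hxz hyz (Or.inl (by simp)) (Or.inl (by simp))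
          (Or.inr rfl))
        (more_pop w hw _ hxy hxz hyz _ _ ?_ ?_)
      · intro l h1 h2 h3
        simp only [triFun_other h1 h2 h3]
        exact p0_not
      · simp only [triFun_x, triFun_y hxy, triFun_z hxz hyz]
        have e1 : ¬ Prefers (ordA a) (ν x) (some a) := pA_top _
        have e2 : ¬ Prefers (ordA b) (ν y) (none : Option O) := fun h => hyb (pA_none.1 h)
        have e3 : Prefers (ordAB a b) (ν z) (none : Option O) :=
          (pAB_none hab).2 (Or.inl hza)
        have f1 : Prefers (ordA a) (some a) (ν x) := pA_best.2 hxa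
        rw [if_neg e1, if_neg e2, if_pos e3, if_pos f1]
        have n2 := ite_nn w hw (Prefers (ordA b) (none : Option O) (ν y)) y
        have n3 := ite_nn w hw (Prefers (ordAB a b) (none : Option O) (ν z)) z
        linarith
  · intro hzb
    have hyb : ν y ≠ some b := fun hc => hyz (matching_unique hpop.1 rfl hc hzb)
    by_cases hxa : ν x = some a
    · refine hpop.2 (triFun x y z none (some b) (some a) none)
        (isMatching_tri hxy hxz hyz (Or.inr rfl) (Or.inr rfl)
          (Or.inl (by simp [Ne.symm hab])))
        (more_pop w hw _ hxy hxz hyz _ _ ?_ ?_)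
      · intro l h1 h2 h3
        simp only [triFun_other h1 h2 h3]
        exact p0_not
      · simp only [triFun_x, triFun_y hxy, triFun_z hxz hyz]
        have e1 : Prefers (ordA a) (ν x) (none : Option O) := pA_none.2 hxa
        have e2 : ¬ Prefers (ordA b) (ν y) (some b) := pA_top _
        have e3 : ¬ Prefers (ordAB a b) (ν z) (some a) := pAB_top _
        have f2 : Prefers (ordA b) (some b) (ν y) := pA_best.2 hyb
        have f3 : Prefers (ordAB a b) (some a) (ν z) :=
          pAB_a.2 (by rw [hzb]; simp [Ne.symm hab])
        rw [if_pos e1, if_neg e2, if_neg e3, if_pos f2, if_pos f3]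
        have n1 := ite_nn w hw (Prefers (ordA a) (none : Option O) (ν x)) x
        linarith
    · refine hpop.2 (triFun x y z (some a) (some b) none none)
        (isMatching_tri hxy hxz hyz (Or.inl (by simp [hab])) (Or.inl (by simp))
          (Or.inl (by simp)))
        (more_pop w hw _ hxy hxz hyz _ _ ?_ ?_)
      · intro l h1 h2 h3
        simp only [triFun_other h1 h2 h3]
        exact p0_not
      · simp only [triFun_x, triFun_y hxy, triFun_z hxz hyz]
        have e1 : ¬ Prefers (ordA a) (ν x) (some a) := pA_top _
        have e2 : ¬ Prefers (ordA b) (ν y) (some b) := pA_top _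
        have e3 : Prefers (ordAB a b) (ν z) (none : Option O) :=
          (pAB_none hab).2 (Or.inr hzb)
        have f1 : Prefers (ordA a) (some a) (ν x) := pA_best.2 hxa
        have f2 : Prefers (ordA b) (some b) (ν y) := pA_best.2 hyb
        rw [if_neg e1, if_neg e2, if_pos e3, if_pos f1, if_pos f2]
        have n3 := ite_nn w hw (Prefers (ordAB a b) (none : Option O) (ν z)) z
        linarith

end Aux3
section Aux4

open Finset

variable {I O : Type} [Fintype I] [Fintype O]
variable {w : I → ℝ} {x y z : I} {a b : O}

/-! ### Case I assembly -/

lemma subI (hxy : x ≠ y) (hxz : x ≠ z) (hyz : y ≠ z) (hab : a ≠ b)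
    (hw : ∀ i, 0 < w i) (hwxy : w x = w y) (hzy : w z < w y)
    (ψ : Mechanism I O) (hWP : WPopularMech w ψ) (hSP : StrategyProof ψ) :
    ψ (triFun x y z (ordA a) (ordA a) (ordA b) ord0) (fun _ => 1) x ≠ some a := by
  intro hxa
  have hvq : ValidCaps (fun _ : O => (1 : ℕ)) := fun _ => le_refl 1
  have hpopA := hWP (triFun x y z (ordA a) (ordA a) (ordA b) ord0) (fun _ => 1) hvq
    ⟨_, exA hxy hxz hyz hab hw (le_of_eq hwxy.symm)⟩
  have hya : ψ (triFun x y z (ordA a) (ordA a) (ordA b) ord0) (fun _ => 1) y ≠ some a :=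
    fun hc => hxy (matching_unique hpopA.1 rfl hxa hc)
  have hpopB := hWP (triFun x y z (ordA a) (ordAB a b) (ordA b) ord0) (fun _ => 1) hvq
    ⟨_, exB hxy hxz hyz hab hw (le_of_eq hwxy)⟩
  have hBy : ψ (triFun x y z (ordA a) (ordAB a b) (ordA b) ord0) (fun _ => 1) y = some a :=
    clB hxy hxz hyz hab hw hzy (by have := hw z; linarith) hpopB
  have hsp := hSP (triFun x y z (ordA a) (ordA a) (ordA b) ord0) (fun _ => 1) hvq y (ordAB a b)
  rw [update_triFun_y hxy, triFun_y hxy, hBy] at hsp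
  exact hsp (pA_best.2 hya)

lemma caseI (hxy : x ≠ y) (hxz : x ≠ z) (hyz : y ≠ z) (hab : a ≠ b)
    (hw : ∀ i, 0 < w i) (hwxy : w x = w y) (hz0 : w z < w x)
    (ψ : Mechanism I O) (hWP : WPopularMech w ψ) (hSP : StrategyProof ψ) : False := by
  have hvq : ValidCaps (fun _ : O => (1 : ℕ)) := fun _ => le_refl 1
  have hpopA := hWP (triFun x y z (ordA a) (ordA a) (ordA b) ord0) (fun _ => 1) hvq
    ⟨_, exA hxy hxz hyz hab hw (le_of_eq hwxy.symm)⟩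
  rcases clA hxy hxz hyz hab hw hpopA with h | h
  · exact subI hxy hxz hyz hab hw hwxy (hwxy ▸ hz0) ψ hWP hSP h
  · have h2 := subI (Ne.symm hxy) hyz hxz hab hw hwxy.symm hz0 ψ hWP hSP
    rw [triFun_swap12 (Ne.symm hxy)] at h2
    exact h2 h

/-! ### Case II assembly -/

lemma subII (hxy : x ≠ y) (hxz : x ≠ z) (hyz : y ≠ z) (hab : a ≠ b)
    (hw : ∀ i, 0 < w i) (hwxy : w x ≤ w y) (hwzy : w z ≤ w y) (hwzx : w z ≤ w x)
    (h1 : w x < w y + w z) (h2 : w z < w x + w y) (h3 : w y < w x + w z)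
    (ψ : Mechanism I O) (hWP : WPopularMech w ψ) (hSP : StrategyProof ψ) :
    ψ (triFun x y z (ordAB a b) (ordAB a b) (ordAB a b) ord0) (fun _ => 1) x = some b := by
  have hvq : ValidCaps (fun _ : O => (1 : ℕ)) := fun _ => le_refl 1
  have hpop2 := hWP (triFun x y z (ordA a) (ordAB a b) (ordAB a b) ord0) (fun _ => 1) hvq
    ⟨_, exG1 hxy hxz hyz hab hw hwxy hwzy⟩
  have h2x := clG1 hxy hxz hyz hab hw h1 hpop2
  have hsp1 := hSP (triFun x y z (ordA a) (ordAB a b) (ordAB a b) ord0) (fun _ => 1) hvq x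
    (ordAB a b)
  rw [update_triFun_x, triFun_x] at hsp1
  have hTa : ψ (triFun x y z (ordAB a b) (ordAB a b) (ordAB a b) ord0) (fun _ => 1) x
      ≠ some a := by
    intro hc
    rw [hc] at hsp1
    exact hsp1 (pA_best.2 h2x)
  have hpop3 := hWP (triFun x y z (ordA b) (ordAB a b) (ordAB a b) ord0) (fun _ => 1) hvq
    ⟨_, exG2 hxy hxz hyz hab hw hwzx hwzy⟩
  have h3x := clG2 hxy hxz hyz hab hw h2 h3 hpop3
  have hsp2 := hSP (triFun x y z (ordAB a b) (ordAB a b) (ordAB a b) ord0) (fun _ => 1) hvq x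
    (ordA b)
  rw [update_triFun_x, triFun_x, h3x] at hsp2
  by_contra hc
  exact hsp2 ((pAB_b hab).2 ⟨hTa, hc⟩)

lemma caseII (hxy : x ≠ y) (hxz : x ≠ z) (hyz : y ≠ z) (hab : a ≠ b)
    (hw : ∀ i, 0 < w i) (hwxy : w x = w y) (hwxz : w x = w z)
    (ψ : Mechanism I O) (hmech : IsMechanism ψ) (hWP : WPopularMech w ψ)
    (hSP : StrategyProof ψ) : False := by
  have hvq : ValidCaps (fun _ : O => (1 : ℕ)) := fun _ => le_refl 1
  have hx := hw x
  have e1 := subII hxy hxz hyz hab hw (le_of_eq hwxy) (by linarith) (by linarith)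
    (by linarith) (by linarith) (by linarith) ψ hWP hSP
  have e2 := subII (Ne.symm hxy) hyz hxz hab hw (le_of_eq hwxy.symm) (by linarith)
    (by linarith) (by linarith) (by linarith) (by linarith) ψ hWP hSP
  rw [triFun_swap12 (Ne.symm hxy)] at e2
  exact hxy (matching_unique
    (hmech (triFun x y z (ordAB a b) (ordAB a b) (ordAB a b) ord0) (fun _ => 1) hvq)
    rfl e1 e2)

/-! ### Case III assembly -/

lemma subIII (hxy : x ≠ y) (hxz : x ≠ z) (hyz : y ≠ z) (hab : a ≠ b)
    (hw : ∀ i, 0 < w i) (hwzx : w z ≤ w x) (hwzy : w z ≤ w y)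
    (hzx : w z < w x) (hxyz : w x < w y + w z)
    (ψ : Mechanism I O) (hWP : WPopularMech w ψ) (hSP : StrategyProof ψ) :
    ψ (triFun x y z (ordA a) (ordA b) (ordA b) ord0) (fun _ => 1) z ≠ some b := by
  intro hc
  have hvq : ValidCaps (fun _ : O => (1 : ℕ)) := fun _ => le_refl 1
  have hpopY := hWP (triFun x y z (ordA a) (ordA b) (ordAB a b) ord0) (fun _ => 1) hvq
    ⟨_, exF2 hxy hxz hyz hab hw hwzx hwzy⟩
  have hYz := clF2 hxy hxz hyz hab hw hzx hxyz hpopY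
  have hsp := hSP (triFun x y z (ordA a) (ordA b) (ordAB a b) ord0) (fun _ => 1) hvq z (ordA b)
  rw [update_triFun_z hxz hyz, triFun_z hxz hyz, hc] at hsp
  exact hsp ((pAB_b hab).2 hYz)

lemma caseIII (hxy : x ≠ y) (hxz : x ≠ z) (hyz : y ≠ z) (hab : a ≠ b)
    (hw : ∀ i, 0 < w i) (hyz' : w y = w z) (hlt : w y < w x) (hgt : w x < w y + w z)
    (ψ : Mechanism I O) (hWP : WPopularMech w ψ) (hSP : StrategyProof ψ) : False := by
  have hvq : ValidCaps (fun _ : O => (1 : ℕ)) := fun _ => le_refl 1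
  have hpopX := hWP (triFun x y z (ordA a) (ordA b) (ordA b) ord0) (fun _ => 1) hvq
    ⟨_, exF1 hxy hxz hyz hab hw (le_of_eq hyz'.symm)⟩
  rcases clF1 hxy hxz hyz hab hw hpopX with h | h
  · have h2 := subIII hxz hxy (Ne.symm hyz) hab hw hlt.le (le_of_eq hyz')
      (by linarith) (by linarith) ψ hWP hSP
    rw [triFun_swap23 (Ne.symm hyz)] at h2
    exact h2 h
  · exact subIII hxy hxz hyz hab hw (by linarith) (le_of_eq hyz'.symm)
      (by linarith) hgt ψ hWP hSP h

/-! ### Extraction of the critical triple -/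

lemma getTriple (hI : 3 ≤ Fintype.card I) (w : I → ℝ) (hw : ∀ i, 0 < w i)
    (e : Fin (Fintype.card I) ≃ I) (he : DecreasingEnum w e)
    (hnd : ¬ DistinctWeights w) (hned : ¬ EssentiallyDistinct w e) :
    ∃ x y z : I, x ≠ y ∧ x ≠ z ∧ y ≠ z ∧ w x = w y ∧ w z < w x + w y := by
  obtain ⟨i, j, hij, hwij⟩ : ∃ i j : I, i ≠ j ∧ w i = w j := by
    obtain ⟨i, j, h1, h2⟩ := Function.not_injective_iff.1 hnd
    exact ⟨i, j, h2, h1⟩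
  obtain ⟨p, q, hpq, htie⟩ :
      ∃ p q : Fin (Fintype.card I), p < q ∧ w (e p) = w (e q) := by
    rcases lt_trichotomy (e.symm i) (e.symm j) with h | h | h
    · exact ⟨_, _, h, by rw [Equiv.apply_symm_apply, Equiv.apply_symm_apply]; exact hwij⟩
    · exact absurd (e.symm.injective h) hij
    · exact ⟨_, _, h, by rw [Equiv.apply_symm_apply, Equiv.apply_symm_apply]; exact hwij.symm⟩
  obtain ⟨t1, ht1⟩ : ∃ t1 : Fin (Fintype.card I), (t1 : ℕ) = Fintype.card I - 1 :=
    ⟨⟨Fintype.card I - 1, by omega⟩, rfl⟩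
  obtain ⟨t2, ht2⟩ : ∃ t2 : Fin (Fintype.card I), (t2 : ℕ) = Fintype.card I - 2 :=
    ⟨⟨Fintype.card I - 2, by omega⟩, rfl⟩
  by_cases hEx : ∃ p q : Fin (Fintype.card I),
      p < q ∧ (q : ℕ) + 2 ≤ Fintype.card I ∧ w (e p) = w (e q)
  · obtain ⟨p, q, h1, h2, h3⟩ := hEx
    have h1' : (p : ℕ) < (q : ℕ) := Fin.lt_def.1 h1
    refine ⟨e p, e q, e t1, ?_, ?_, ?_, h3, ?_⟩
    · exact fun hc => absurd (e.injective hc) (ne_of_lt h1)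
    · intro hc
      have := congrArg Fin.val (e.injective hc)
      omega
    · intro hc
      have := congrArg Fin.val (e.injective hc)
      omega
    · have hle : w (e t1) ≤ w (e q) := by
        apply he
        rw [Fin.le_def]
        have := q.isLt
        omega
      have := hw (e p)
      linarith
  · have hq' : (q : ℕ) < Fintype.card I := q.isLt
    have hpq' : (p : ℕ) < (q : ℕ) := Fin.lt_def.1 hpq
    have hq1 : (q : ℕ) = Fintype.card I - 1 := by
      by_contra hc
      exact hEx ⟨p, q, hpq, by omega, htie⟩
    have hp1 : (p : ℕ) = Fintype.card I - 2 := by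
      by_contra hc
      have hplt : (p : ℕ) < Fintype.card I - 2 := by omega
      have h1 : p < t2 := by rw [Fin.lt_def]; omega
      have h2 : t2 < q := by rw [Fin.lt_def]; omega
      have hw1 : w (e t2) ≤ w (e p) := he p t2 h1.le
      have hw2 : w (e q) ≤ w (e t2) := he t2 q h2.le
      have heq : w (e p) = w (e t2) := le_antisymm (by rw [htie]; exact hw2) hw1
      exact hEx ⟨p, t2, h1, by omega, heq⟩
    have hC1 : ∀ j k : Fin (Fintype.card I), j < k → (k : ℕ) + 2 ≤ Fintype.card I →
        w (e j) ≠ w (e k) := by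
      intro j k hjk hk2 heq
      exact hEx ⟨j, k, hjk, hk2, heq⟩
    have hC2 : ∀ j k : Fin (Fintype.card I), (j : ℕ) + 2 = Fintype.card I →
        (k : ℕ) + 1 = Fintype.card I → w (e j) = w (e k) := by
      intro j k hj hk
      have hjp : j = p := Fin.val_injective (by omega)
      have hkq : k = q := Fin.val_injective (by omega)
      rw [hjp, hkq]
      exact htie
    have hC3 : ¬ (∀ j k l : Fin (Fintype.card I), (j : ℕ) + 3 = Fintype.card I →
        (k : ℕ) + 2 = Fintype.card I → (l : ℕ) + 1 = Fintype.card I →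
        w (e k) + w (e l) ≤ w (e j)) := fun hC3 => hned ⟨hC1, hC2, hC3⟩
    push_neg at hC3
    obtain ⟨j, k, l, hj, hk, hl, hlt⟩ := hC3
    have hkp : k = p := Fin.val_injective (by omega)
    have hlq : l = q := Fin.val_injective (by omega)
    rw [hkp, hlq] at hlt
    refine ⟨e p, e q, e j, fun hc => absurd (e.injective hc) (ne_of_lt hpq), ?_, ?_, htie, hlt⟩
    · intro hc
      have := congrArg Fin.val (e.injective hc)
      omega
    · intro hc
      have := congrArg Fin.val (e.injective hc)
      omega

end Aux4

/-- If the weights are neither distinct nor essentially distinct, no mechanism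
is both w-popular and strategy-proof. -/
theorem stmt9 {I O : Type} [Fintype I] [Fintype O]
    (hI : 3 ≤ Fintype.card I) (hIO : Fintype.card I ≤ Fintype.card O)
    (w : I → ℝ) (hw : ∀ i, 0 < w i)
    (e : Fin (Fintype.card I) ≃ I) (he : DecreasingEnum w e)
    (hnd : ¬ DistinctWeights w) (hned : ¬ EssentiallyDistinct w e) :
    ¬ ∃ ψ : Mechanism I O, IsMechanism ψ ∧ WPopularMech w ψ ∧ StrategyProof ψ := by
  rintro ⟨ψ, hmech, hWP, hSP⟩
  have hO : 1 < Fintype.card O := lt_of_lt_of_le (by omega) hIO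
  obtain ⟨a, b, hab⟩ := Fintype.exists_pair_of_one_lt_card hO
  obtain ⟨x, y, z, hxy, hxz, hyz, hwxy, hwz⟩ := getTriple hI w hw e he hnd hned
  rcases lt_trichotomy (w z) (w x) with h | h | h
  · exact caseI hxy hxz hyz hab hw hwxy h ψ hWP hSP
  · exact caseII hxy hxz hyz hab hw hwxy h.symm ψ hmech hWP hSP
  · exact caseIII (Ne.symm hxz) (Ne.symm hyz) hxy hab hw hwxy h hwz ψ hWP hSP
end
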